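/- arXiv:1403.8106 — 7 statements merged into one kernel-verified Lean document; each statement's English description precedes it below -/
import Mathlib

section
/- For every α > 0 there exists ε > 0 such that the following holds for every r ≥ 1: if A, B ⊆ F_2^r are nonempty sets that are (1−ε)-approximate dual, then there exist nonempty subsets A' ⊆ A, B' ⊆ B and a value c ∈ F_2 with ⟨a,b⟩ = c for all a ∈ A', b ∈ B', and satisfying |A| ≤ 2^{α·r}·|A'| and |B| ≤ 2^{α·r}·|B'|. -/
/-- The approximate duality measure of two finite sets `A, B ⊆ 𝔽₂ʳ`:
`|E_{a∈A, b∈B}[(−1)^{⟨a,b⟩}]|`. -/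
noncomputable def dualMeasure {r : ℕ} (A B : Finset (Fin r → ZMod 2)) : ℝ :=
  |∑ a ∈ A, ∑ b ∈ B, (if (∑ i, a i * b i) = (0 : ZMod 2) then (1 : ℝ) else -1)| /
    (A.card * B.card)

/-!
For some `c`, approximate duality makes all but an `ε/2` fraction of the pairs satisfy
`⟨a, b⟩ = c`, so by Markov half of the rows `a ∈ A` have at most `ε|B|` mismatches. Among these
rows, either half of `B` matches `c` against every row, or by double counting some column `b₀`
mismatches at least one row but fewer than a `2ε` fraction of them. Keeping only the rows with
`⟨a, b₀⟩ = c` costs a factor `1 - 2ε` and strictly lowers the dimension of their affine span, so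
there are at most `r` rounds, and `(1 - 2ε)^r` is absorbed by `2^{αr}` for small `ε`. When `r` is
too small for that, `ε|A||B| < 1` and there is no mismatch at all.
-/

open Finset Module

section DoubleCounting

variable {α β : Type*}

theorem card_le_two_mul_card_filter_le_of_sum_le (s : Finset α) {g : α → ℝ} {t : ℝ} (ht : 0 < t)
    (hg : ∀ a ∈ s, 0 ≤ g a) (hsum : ∑ a ∈ s, g a ≤ t / 2 * #s) :
    (#s : ℝ) ≤ 2 * #{a ∈ s | g a ≤ t} := by
  have hlarge : #{a ∈ s | ¬ g a ≤ t} • t ≤ ∑ a ∈ s with ¬ g a ≤ t, g a :=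
    card_nsmul_le_sum _ _ _ fun a ha => (not_le.1 (mem_filter.1 ha).2).le
  have hsub : ∑ a ∈ s with ¬ g a ≤ t, g a ≤ ∑ a ∈ s, g a :=
    sum_le_sum_of_subset_of_nonneg (filter_subset _ _) fun a ha _ => hg a ha
  have hsplit : (#{a ∈ s | g a ≤ t} : ℝ) + #{a ∈ s | ¬ g a ≤ t} = #s := by
    exact_mod_cast card_filter_add_card_filter_not _
  rw [nsmul_eq_mul] at hlarge
  have : (#{a ∈ s | ¬ g a ≤ t} : ℝ) * t ≤ (#s / 2) * t := by linarith
  linarith [le_of_mul_le_mul_right this ht]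

theorem exists_mem_card_filter_lt (r : α → β → Prop) [∀ a b, Decidable (r a b)]
    {s : Finset α} {t u : Finset β} {δ : ℝ} (hδ : 0 < δ) (hs : s.Nonempty) (hut : u ⊆ t)
    (hu : #t < 2 * #u) (hrow : ∀ a ∈ s, (#{b ∈ t | r a b} : ℝ) ≤ δ * #t) :
    ∃ b ∈ u, (#{a ∈ s | r a b} : ℝ) < 2 * δ * #s := by
  by_contra! hcol
  have hcount := card_nsmul_le_card_nsmul' r hcol fun a ha =>
    (Nat.cast_le.2 (card_le_card (filter_subset_filter _ hut))).trans (hrow a ha)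
  simp only [nsmul_eq_mul] at hcount
  have hs' : (0 : ℝ) < δ * #s := mul_pos hδ (by exact_mod_cast hs.card_pos)
  have hu' : (#t : ℝ) < 2 * #u := by exact_mod_cast hu
  nlinarith

end DoubleCounting

theorem vectorSpan_sep_lt {K V W : Type*} [Ring K] [AddCommGroup V] [Module K V]
    [AddCommGroup W] [Module K W] (f : V →ₗ[K] W) {s : Set V} {c : W} {p q : V}
    (hp : p ∈ s) (hpc : f p ≠ c) (hq : q ∈ s) (hqc : f q = c) :
    vectorSpan K {x ∈ s | f x = c} < vectorSpan K s := by
  have hker : vectorSpan K {x ∈ s | f x = c} ≤ LinearMap.ker f := by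
    rw [vectorSpan_def, Submodule.span_le]
    rintro _ ⟨x, ⟨-, hx⟩, y, ⟨-, hy⟩, rfl⟩
    simp [hx, hy]
  refine lt_of_le_of_ne (vectorSpan_mono K (Set.sep_subset _ _)) fun heq => hpc ?_
  have hpq := hker (heq ▸ vsub_mem_vectorSpan K hp hq)
  rwa [LinearMap.mem_ker, vsub_eq_sub, map_sub, sub_eq_zero, hqc] at hpq

section DotProduct

variable {K ι : Type*} [Field K] [DecidableEq K] [Fintype ι]

theorem exists_large_subsets_dotProduct_eq {B : Finset (ι → K)} (hB : B.Nonempty) (c : K)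
    {δ : ℝ} (hδ0 : 0 < δ) (hδ : δ ≤ 1 / 2) (A : Finset (ι → K)) (hA : A.Nonempty)
    (hrow : ∀ a ∈ A, (#{b ∈ B | a ⬝ᵥ b ≠ c} : ℝ) ≤ δ * #B) :
    ∃ A' ⊆ A, ∃ B' ⊆ B, A'.Nonempty ∧ B'.Nonempty ∧ (∀ a ∈ A', ∀ b ∈ B', a ⬝ᵥ b = c) ∧
      (1 - 2 * δ) ^ finrank K (vectorSpan K (A : Set (ι → K))) * #A ≤ #A' ∧
      (#B : ℝ) ≤ 2 * #B' := by
  obtain ⟨d, hd⟩ : ∃ d, finrank K (vectorSpan K (A : Set (ι → K))) = d := ⟨_, rfl⟩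
  induction d using Nat.strong_induction_on generalizing A with
  | _ d ih =>
  rw [hd]
  have hB' : (0 : ℝ) < #B := by exact_mod_cast hB.card_pos
  by_cases hgood : (#B : ℝ) ≤ 2 * #{b ∈ B | ∀ a ∈ A, a ⬝ᵥ b = c}
  · refine ⟨A, subset_rfl, {b ∈ B | ∀ a ∈ A, a ⬝ᵥ b = c}, filter_subset _ _, hA, ?_,
      fun a ha b hb => (mem_filter.1 hb).2 a ha,
      mul_le_of_le_one_left (Nat.cast_nonneg _) (pow_le_one₀ (by linarith) (by linarith)), hgood⟩
    exact card_pos.1 (by exact_mod_cast (show (0 : ℝ) < #{b ∈ B | ∀ a ∈ A, a ⬝ᵥ b = c} by linarith))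
  have hbad : #B < 2 * #{b ∈ B | ¬ ∀ a ∈ A, a ⬝ᵥ b = c} := by
    have hsplit : (#{b ∈ B | ∀ a ∈ A, a ⬝ᵥ b = c} : ℝ) + #{b ∈ B | ¬ ∀ a ∈ A, a ⬝ᵥ b = c} = #B := by
      exact_mod_cast card_filter_add_card_filter_not _
    exact_mod_cast (by linarith : (#B : ℝ) < 2 * #{b ∈ B | ¬ ∀ a ∈ A, a ⬝ᵥ b = c})
  obtain ⟨b₀, hb₀, hb₀few⟩ :=
    exists_mem_card_filter_lt (fun a b => a ⬝ᵥ b ≠ c) hδ0 hA (filter_subset _ _) hbad hrow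
  obtain ⟨a₁, ha₁, ha₁c⟩ := not_forall₂.1 (mem_filter.1 hb₀).2
  set A₂ := {a ∈ A | a ⬝ᵥ b₀ = c}
  have hA₂card : (1 - 2 * δ) * #A < #A₂ := by
    have : (#A₂ : ℝ) + #{a ∈ A | a ⬝ᵥ b₀ ≠ c} = #A := by
      exact_mod_cast card_filter_add_card_filter_not _
    linarith
  have hA₂ : A₂.Nonempty :=
    card_pos.1 (by exact_mod_cast (show (0 : ℝ) < #A₂ by nlinarith [hA.card_pos]))
  have hlt : finrank K (vectorSpan K (A₂ : Set (ι → K))) < d := by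
    obtain ⟨q, hq⟩ := hA₂
    rw [← hd, coe_filter]
    exact Submodule.finrank_lt_finrank_of_lt <| vectorSpan_sep_lt ((dotProductBilin K K).flip b₀)
      ha₁ ha₁c (filter_subset _ _ hq) (mem_filter.1 hq).2
  obtain ⟨A', hA'A₂, B', hB'B, hA', hB', hconst, hA'card, hB'card⟩ :=
    ih _ hlt A₂ hA₂ (fun a ha => hrow a (filter_subset _ _ ha)) rfl
  refine ⟨A', hA'A₂.trans (filter_subset _ _), B', hB'B, hA', hB', hconst, ?_, hB'card⟩
  calc (1 - 2 * δ) ^ d * #A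
      ≤ (1 - 2 * δ) ^ (finrank K (vectorSpan K (A₂ : Set (ι → K))) + 1) * #A := by
        exact mul_le_mul_of_nonneg_right
          (pow_le_pow_of_le_one (by linarith) (by linarith) hlt) (Nat.cast_nonneg _)
    _ ≤ (1 - 2 * δ) ^ finrank K (vectorSpan K (A₂ : Set (ι → K))) * #A₂ := by
        rw [pow_succ, mul_assoc]
        exact mul_le_mul_of_nonneg_left hA₂card.le (pow_nonneg (by linarith) _)
    _ ≤ #A' := hA'card

theorem exists_large_subsets_dotProduct_eq_of_sum_le {A B : Finset (ι → K)} (hA : A.Nonempty)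
    (hB : B.Nonempty) {c : K} {ε : ℝ} (hε0 : 0 < ε) (hε : ε ≤ 1 / 2)
    (hc : ∑ a ∈ A, (#{b ∈ B | a ⬝ᵥ b ≠ c} : ℝ) ≤ ε / 2 * (#A * #B)) :
    ∃ A' ⊆ A, ∃ B' ⊆ B, A'.Nonempty ∧ B'.Nonempty ∧ (∀ a ∈ A', ∀ b ∈ B', a ⬝ᵥ b = c) ∧
      (1 - 2 * ε) ^ Fintype.card ι * #A ≤ 2 * #A' ∧ (#B : ℝ) ≤ 2 * #B' := by
  have hApos : (0 : ℝ) < #A := by exact_mod_cast hA.card_pos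
  have hBpos : (0 : ℝ) < #B := by exact_mod_cast hB.card_pos
  set A₀ := {a ∈ A | (#{b ∈ B | a ⬝ᵥ b ≠ c} : ℝ) ≤ ε * #B}
  have hA₀ : (#A : ℝ) ≤ 2 * #A₀ :=
    card_le_two_mul_card_filter_le_of_sum_le A (mul_pos hε0 hBpos)
      (fun _ _ => Nat.cast_nonneg _) (by linarith)
  have hA₀ne : A₀.Nonempty := card_pos.1 (by exact_mod_cast (by linarith : (0 : ℝ) < #A₀))
  obtain ⟨A', hA'A₀, B', hB'B, hA', hB', hconst, hA'card, hB'card⟩ :=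
    exists_large_subsets_dotProduct_eq hB c hε0 hε A₀ hA₀ne fun a ha => (mem_filter.1 ha).2
  refine ⟨A', hA'A₀.trans (filter_subset _ _), B', hB'B, hA', hB', hconst, ?_, hB'card⟩
  have hrank : finrank K (vectorSpan K (A₀ : Set (ι → K))) ≤ Fintype.card ι :=
    (Submodule.finrank_le _).trans (finrank_pi K).le
  calc (1 - 2 * ε) ^ Fintype.card ι * #A
      ≤ (1 - 2 * ε) ^ finrank K (vectorSpan K (A₀ : Set (ι → K))) * (2 * #A₀) :=
        mul_le_mul (pow_le_pow_of_le_one (by linarith) (by linarith) hrank) hA₀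
          (Nat.cast_nonneg _) (pow_nonneg (by linarith) _)
    _ ≤ 2 * #A' := by linarith

end DotProduct

theorem exists_sum_card_filter_ne_le_of_le_dualMeasure {r : ℕ} {A B : Finset (Fin r → ZMod 2)}
    (hA : A.Nonempty) (hB : B.Nonempty) {ε : ℝ} (h : 1 - ε ≤ dualMeasure A B) :
    ∃ c : ZMod 2, ∑ a ∈ A, (#{b ∈ B | a ⬝ᵥ b ≠ c} : ℝ) ≤ ε / 2 * (#A * #B) := by
  set N : ZMod 2 → ℝ := fun c => ∑ a ∈ A, (#{b ∈ B | a ⬝ᵥ b ≠ c} : ℝ)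
  have hne_one : ∀ a, {b ∈ B | a ⬝ᵥ b ≠ 1} = {b ∈ B | a ⬝ᵥ b = 0} := fun a =>
    filter_congr fun b _ => by generalize a ⬝ᵥ b = z; revert z; decide
  have hsplit : ∀ a, (#{b ∈ B | a ⬝ᵥ b ≠ 0} : ℝ) + #{b ∈ B | a ⬝ᵥ b ≠ 1} = #B := fun a => by
    rw [add_comm, hne_one]; exact_mod_cast card_filter_add_card_filter_not _
  have htotal : N 0 + N 1 = #A * #B := by
    simp only [N, ← sum_add_distrib, hsplit, sum_const, nsmul_eq_mul]
  have hsign : ∑ a ∈ A, ∑ b ∈ B, (if ∑ i, a i * b i = 0 then (1 : ℝ) else -1) = N 1 - N 0 := by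
    simp only [N, ← sum_sub_distrib, hne_one]
    refine sum_congr rfl fun a _ => ?_
    rw [sum_ite, sum_const, sum_const, nsmul_eq_mul, nsmul_eq_mul, mul_one, mul_neg_one,
      ← sub_eq_add_neg]
    rfl
  rw [dualMeasure, hsign, le_div_iff₀ (by positivity [hA.card_pos, hB.card_pos])] at h
  rcases le_total (N 0) (N 1) with h01 | h10
  · exact ⟨0, by rw [abs_of_nonneg (by linarith)] at h; linarith⟩
  · exact ⟨1, by rw [abs_of_nonpos (by linarith)] at h; linarith⟩

theorem two_le_mul_four_pow_of_not_forall_dotProduct_eq {r : ℕ}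
    {A B : Finset (Fin r → ZMod 2)} {c : ZMod 2} {ε : ℝ}
    (hc : ∑ a ∈ A, (#{b ∈ B | a ⬝ᵥ b ≠ c} : ℝ) ≤ ε / 2 * (#A * #B))
    (hexact : ¬ ∀ a ∈ A, ∀ b ∈ B, a ⬝ᵥ b = c) :
    2 ≤ ε * 4 ^ r := by
  obtain ⟨a, ha, hab⟩ := not_forall₂.1 hexact
  obtain ⟨b, hb, hne⟩ := not_forall₂.1 hab
  have hrow : (1 : ℝ) ≤ #{b ∈ B | a ⬝ᵥ b ≠ c} := by
    exact_mod_cast card_pos.2 ⟨b, mem_filter.2 ⟨hb, hne⟩⟩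
  have hmismatch : (1 : ℝ) ≤ ∑ a ∈ A, (#{b ∈ B | a ⬝ᵥ b ≠ c} : ℝ) :=
    hrow.trans (single_le_sum (f := fun a => (#{b ∈ B | a ⬝ᵥ b ≠ c} : ℝ))
      (fun _ _ => Nat.cast_nonneg _) ha)
  have hcard : ∀ S : Finset (Fin r → ZMod 2), (#S : ℝ) ≤ 2 ^ r := fun S => by
    exact_mod_cast (card_le_univ S).trans (by simp)
  have hAB : (#A : ℝ) * #B ≤ 4 ^ r := by
    rw [show (4 : ℝ) ^ r = 2 ^ r * 2 ^ r by rw [← mul_pow]; norm_num]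
    exact mul_le_mul (hcard A) (hcard B) (Nat.cast_nonneg _) (by positivity)
  have hε : 0 ≤ ε := by
    by_contra! hε
    nlinarith [mul_nonneg (Nat.cast_nonneg (α := ℝ) #A) (Nat.cast_nonneg (α := ℝ) #B)]
  nlinarith [mul_le_mul_of_nonneg_left hAB hε]

theorem exists_pos_two_le_rpow_mul_pow {α : ℝ} (hα : 0 < α) :
    ∃ ε : ℝ, 0 < ε ∧ ε ≤ 1 / 2 ∧
      ∀ r : ℕ, 2 ≤ ε * 4 ^ r → 2 ≤ (2 : ℝ) ^ (α * r) * (1 - 2 * ε) ^ r := by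
  set θ : ℝ := 2 ^ (-(α / 2))
  have hθ0 : 0 < θ := by positivity
  have hθ1 : θ < 1 := Real.rpow_lt_one_of_one_lt_of_neg (by norm_num) (by linarith)
  set ε := min (2 ^ (-(4 / α))) ((1 - θ) / 2)
  have hεθ : ε ≤ (1 - θ) / 2 := min_le_right _ _
  refine ⟨ε, lt_min (by positivity) (by linarith), by linarith, fun r hr => ?_⟩
  have hαr : 2 ≤ α * r := by
    have h4 : (4 : ℝ) ^ r = 2 ^ (2 * (r : ℝ)) := by
      rw [Real.rpow_mul_natCast (by norm_num)]; norm_num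
    have : (2 : ℝ) ^ (1 : ℝ) ≤ 2 ^ (-(4 / α) + 2 * r) := by
      rw [Real.rpow_one, Real.rpow_add (by norm_num), ← h4]
      exact hr.trans (mul_le_mul_of_nonneg_right (min_le_left _ _) (by positivity))
    rw [Real.rpow_le_rpow_left_iff (by norm_num)] at this
    have : 4 / α * α = 4 := div_mul_cancel₀ _ hα.ne'
    nlinarith
  calc (2 : ℝ) = 2 ^ (1 : ℝ) := (Real.rpow_one 2).symm
    _ ≤ 2 ^ (α * r + -(α / 2) * r) :=
        Real.rpow_le_rpow_of_exponent_le (by norm_num) (by linarith)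
    _ = 2 ^ (α * r) * θ ^ r := by
        rw [Real.rpow_add (by norm_num), Real.rpow_mul_natCast (by norm_num) (-(α / 2))]
    _ ≤ 2 ^ (α * r) * (1 - 2 * ε) ^ r := by gcongr; linarith

/-- For every `α > 0` there exists `ε > 0` such that for every `r ≥ 1`: if nonempty
`A, B ⊆ 𝔽₂ʳ` are `(1−ε)`-approximate dual, then there are nonempty subsets `A' ⊆ A`, `B' ⊆ B`
on which the inner product is constant, with `|A| ≤ 2^{αr}·|A'|` and `|B| ≤ 2^{αr}·|B'|`. -/
theorem weak_approximate_duality :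
    ∀ α : ℝ, 0 < α →
      ∃ ε : ℝ, 0 < ε ∧
        ∀ r : ℕ, 1 ≤ r →
          ∀ A B : Finset (Fin r → ZMod 2), A.Nonempty → B.Nonempty →
            1 - ε ≤ dualMeasure A B →
            ∃ (A' B' : Finset (Fin r → ZMod 2)) (c : ZMod 2),
              A' ⊆ A ∧ B' ⊆ B ∧ A'.Nonempty ∧ B'.Nonempty ∧
              (∀ a ∈ A', ∀ b ∈ B', (∑ i, a i * b i) = c) ∧
              (A.card : ℝ) ≤ 2 ^ (α * r) * A'.card ∧
              (B.card : ℝ) ≤ 2 ^ (α * r) * B'.card := by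
  intro α hα
  obtain ⟨ε, hε0, hε, hεr⟩ := exists_pos_two_le_rpow_mul_pow hα
  refine ⟨ε, hε0, fun r _ A B hA hB hdual => ?_⟩
  obtain ⟨c, hc⟩ := exists_sum_card_filter_ne_le_of_le_dualMeasure hA hB hdual
  by_cases hexact : ∀ a ∈ A, ∀ b ∈ B, a ⬝ᵥ b = c
  · have h2r : (1 : ℝ) ≤ 2 ^ (α * r) := Real.one_le_rpow (by norm_num) (by positivity)
    exact ⟨A, B, c, subset_rfl, subset_rfl, hA, hB, hexact,
      le_mul_of_one_le_left (Nat.cast_nonneg _) h2r, le_mul_of_one_le_left (Nat.cast_nonneg _) h2r⟩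
  have hr : 2 ≤ ε * 4 ^ r := two_le_mul_four_pow_of_not_forall_dotProduct_eq hc hexact
  obtain ⟨A', hA'A, B', hB'B, hA', hB', hconst, hA'card, hB'card⟩ :=
    exists_large_subsets_dotProduct_eq_of_sum_le hA hB hε0 hε hc
  rw [Fintype.card_fin] at hA'card
  have hgain := hεr r hr
  have h2r : (0 : ℝ) ≤ 2 ^ (α * r) := by positivity
  have h2 : 2 ≤ (2 : ℝ) ^ (α * r) :=
    hgain.trans (mul_le_of_le_one_right h2r (pow_le_one₀ (by linarith) (by linarith)))
  refine ⟨A', B', c, hA'A, hB'B, hA', hB', hconst, ?_, ?_⟩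
  · nlinarith [mul_le_mul_of_nonneg_right hgain (Nat.cast_nonneg (α := ℝ) #A),
      mul_le_mul_of_nonneg_left hA'card h2r]
  · nlinarith [mul_le_mul_of_nonneg_right h2 (Nat.cast_nonneg (α := ℝ) #B')]
end

section
/- There exists a constant C > 0 such that for all finite nonempty sets X, Y and every f : X × Y → {0,1} with r = rank(f) ≥ 1, there exists a nonempty rectangle R ⊆ X × Y with |R| ≥ |X × Y|/(C·r^{3/2}) and bias(f|R) ≥ 1/(C·r^{3/2}). -/
/-!
Let `E = ((-1)^{f(x,y)})` be the sign matrix of `f`, of rank `ρ ≤ rank f + 1`. The Gram matrix `EᵀE`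
has trace `|X||Y|` and rank `ρ`, so it has an eigenvalue `μ ≥ |X||Y|/ρ` with a unit eigenvector `v`.
Since all entries of `E` are `±1`, Cauchy–Schwarz bounds the entries of `w = Ev` by `√|Y|` and those
of `v = Eᵀw/μ` by `√(|X|/μ)`; hence `‖w‖₁ ≥ μ/√|Y|`, and testing `E` against the sign vectors
`x = sign w` and `y = sign(Eᵀx)` gives `xᵀEy = ‖Eᵀx‖₁ ≥ ‖w‖₁/‖v‖_∞ ≥ |X||Y|/ρ^{3/2}`. Splitting `x`
and `y` by sign turns this into a rectangle on which the entries of `E` sum to at least a quarter of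
that, and such a rectangle is both large and biased.
-/

open Finset Matrix

/-- The real rank of the 0/1 matrix associated to a boolean function `f : X × Y → {0,1}`. -/
noncomputable def rankOf {X Y : Type*} [Fintype X] [Fintype Y] (f : X → Y → Bool) : ℕ :=
  (Matrix.of (fun x y => if f x y then (1 : ℝ) else 0)).rank

/-- The bias of `f` over the rectangle `A × B`: `|E_{(x,y)∈A×B}[(−1)^{f(x,y)}]|`. -/
noncomputable def biasOn {X Y : Type*} (f : X → Y → Bool) (A : Finset X) (B : Finset Y) : ℝ :=
  |∑ x ∈ A, ∑ y ∈ B, (if f x y then (-1 : ℝ) else 1)| / (A.card * B.card)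

namespace Matrix

theorem rank_add_le {m n R : Type*} [Field R] [Fintype m] [Fintype n] (A B : Matrix m n R) :
    (A + B).rank ≤ A.rank + B.rank := by
  rw [rank, rank, rank, mulVecLin_add]
  exact (Submodule.finrank_mono (LinearMap.range_add_le _ _)).trans
    (Submodule.finrank_add_le_finrank_add_finrank _ _)

theorem IsHermitian.exists_trace_le_rank_mul_eigenvalues {n : Type*} [Fintype n] [DecidableEq n]
    [Nonempty n] {A : Matrix n n ℝ} (hA : A.IsHermitian) :
    ∃ j, A.trace ≤ A.rank * hA.eigenvalues j := by
  set s := univ.filter fun j => hA.eigenvalues j ≠ 0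
  have htrace : A.trace = ∑ j ∈ s, hA.eigenvalues j := by
    rw [sum_filter_ne_zero, hA.trace_eq_sum_eigenvalues]
    simp
  have hrank : A.rank = s.card := by
    rw [hA.rank_eq_card_non_zero_eigs, Fintype.card_subtype]
  rcases s.eq_empty_or_nonempty with hs | hs
  · exact ⟨Classical.arbitrary n, by simp [htrace, hrank, hs]⟩
  · obtain ⟨j, -, hj⟩ := exists_le_of_sum_le hs (f := fun _ => A.trace)
      (g := fun j => A.rank * hA.eigenvalues j)
      (by rw [sum_const, ← mul_sum, ← htrace, hrank, nsmul_eq_mul])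
    exact ⟨j, hj⟩

end Matrix

section SignVectors

variable {ι : Type*} [Fintype ι]

theorem abs_dotProduct_le_mul_sum_abs {a b : ι → ℝ} {β : ℝ} (ha : ∀ i, |a i| ≤ β) :
    |a ⬝ᵥ b| ≤ β * ∑ i, |b i| := by
  rw [mul_sum]
  refine (abs_sum_le_sum_abs _ _).trans (sum_le_sum fun i _ => ?_)
  rw [abs_mul]
  exact mul_le_mul_of_nonneg_right (ha i) (abs_nonneg _)

theorem exists_abs_le_one_dotProduct_eq_sum_abs (a : ι → ℝ) :
    ∃ x : ι → ℝ, (∀ i, |x i| ≤ 1) ∧ x ⬝ᵥ a = ∑ i, |a i| := by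
  refine ⟨fun i => SignType.sign (a i), fun i => ?_, sum_congr rfl fun i _ => sign_mul_self _⟩
  rcases lt_trichotomy (a i) 0 with h | h | h <;> simp [h]

theorem exists_sum_abs_le_two_mul_abs_sum (t : ι → ℝ) :
    ∃ B : Finset ι, ∑ i, |t i| ≤ 2 * |∑ i ∈ B, t i| := by
  set P := univ.filter fun i => 0 ≤ t i
  set N := univ.filter fun i => ¬0 ≤ t i
  have hsplit : ∑ i, |t i| = ∑ i ∈ P, t i - ∑ i ∈ N, t i := by
    rw [← sum_filter_add_sum_filter_not univ (fun i => 0 ≤ t i), sub_eq_add_neg,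
      ← sum_neg_distrib]
    congr 1 <;> refine sum_congr rfl fun i hi => ?_
    · exact abs_of_nonneg (mem_filter.1 hi).2
    · exact abs_of_neg (not_le.1 (mem_filter.1 hi).2)
  have hP := le_abs_self (∑ i ∈ P, t i)
  have hN := neg_abs_le (∑ i ∈ N, t i)
  by_cases h : |∑ i ∈ P, t i| ≤ |∑ i ∈ N, t i|
  · exact ⟨N, by linarith⟩
  · exact ⟨P, by linarith⟩

end SignVectors

namespace Matrix

variable {X Y : Type*} [Fintype Y]

theorem sq_mulVec_apply_le (E : Matrix X Y ℝ) (hE : ∀ i j, |E i j| ≤ 1) (v : Y → ℝ) (i : X) :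
    (E *ᵥ v) i ^ 2 ≤ Fintype.card Y * (v ⬝ᵥ v) := by
  calc (E *ᵥ v) i ^ 2 ≤ (∑ j, E i j ^ 2) * ∑ j, v j ^ 2 := sum_mul_sq_le_sq_mul_sq _ _ _
    _ ≤ Fintype.card Y * (v ⬝ᵥ v) := by
        simp only [dotProduct, ← sq]
        gcongr
        exact (sum_le_sum fun j _ => (sq_le_one_iff_abs_le_one _).2 (hE i j)).trans (by simp)

variable [Fintype X]

theorem exists_abs_dotProduct_mulVec_le_four_mul_abs_sum (E : Matrix X Y ℝ) {x : X → ℝ}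
    {y : Y → ℝ} (hx : ∀ i, |x i| ≤ 1) (hy : ∀ j, |y j| ≤ 1) :
    ∃ (A : Finset X) (B : Finset Y), |x ⬝ᵥ E *ᵥ y| ≤ 4 * |∑ i ∈ A, ∑ j ∈ B, E i j| := by
  obtain ⟨A, hA⟩ := exists_sum_abs_le_two_mul_abs_sum (E *ᵥ y)
  obtain ⟨B, hB⟩ := exists_sum_abs_le_two_mul_abs_sum fun j => ∑ i ∈ A, E i j
  have hrows : ∑ i ∈ A, (E *ᵥ y) i = y ⬝ᵥ fun j => ∑ i ∈ A, E i j := by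
    simp only [mulVec, dotProduct, mul_sum]
    rw [sum_comm]
    exact sum_congr rfl fun _ _ => sum_congr rfl fun _ _ => mul_comm _ _
  refine ⟨A, B, ?_⟩
  calc |x ⬝ᵥ E *ᵥ y| ≤ 1 * ∑ i, |(E *ᵥ y) i| := abs_dotProduct_le_mul_sum_abs hx
    _ ≤ 2 * (1 * ∑ j, |∑ i ∈ A, E i j|) := by
        rw [one_mul]
        exact hA.trans (by rw [hrows]; gcongr; exact abs_dotProduct_le_mul_sum_abs hy)
    _ ≤ 4 * |∑ j ∈ B, ∑ i ∈ A, E i j| := by linarith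
    _ = 4 * |∑ i ∈ A, ∑ j ∈ B, E i j| := by rw [sum_comm]

theorem exists_pow_three_le_dotProduct_mulVec_sq (E : Matrix X Y ℝ)
    (hE : ∀ i j, |E i j| ≤ 1) {μ : ℝ} (hμ : 0 < μ) {v : Y → ℝ} (hv : v ⬝ᵥ v = 1)
    (heig : (Eᵀ * E) *ᵥ v = μ • v) :
    ∃ (x : X → ℝ) (y : Y → ℝ), (∀ i, |x i| ≤ 1) ∧ (∀ j, |y j| ≤ 1) ∧
      μ ^ 3 ≤ Fintype.card X * Fintype.card Y * (x ⬝ᵥ E *ᵥ y) ^ 2 := by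
  set m : ℝ := (Fintype.card X : ℝ)
  set n : ℝ := (Fintype.card Y : ℝ)
  set w := E *ᵥ v
  have hEw : Eᵀ *ᵥ w = μ • v := by rw [mulVec_mulVec, heig]
  have hww : w ⬝ᵥ w = μ := by
    rw [dotProduct_mulVec, ← mulVec_transpose, hEw, smul_dotProduct, hv, smul_eq_mul, mul_one]
  have hw : ∀ i, |w i| ≤ √n := fun i =>
    Real.abs_le_sqrt ((E.sq_mulVec_apply_le hE v i).trans (by rw [hv, mul_one]))
  have hv_small : ∀ j, |v j| ≤ √(m / μ) := by
    intro j
    have h := Eᵀ.sq_mulVec_apply_le (fun j i => hE i j) w j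
    rw [hEw, hww, Pi.smul_apply, smul_eq_mul, mul_pow] at h
    refine Real.abs_le_sqrt ?_
    rw [le_div_iff₀ hμ]
    nlinarith
  obtain ⟨x, hx, hxw⟩ := exists_abs_le_one_dotProduct_eq_sum_abs w
  set d := Eᵀ *ᵥ x
  obtain ⟨y, hy, hyd⟩ := exists_abs_le_one_dotProduct_eq_sum_abs d
  refine ⟨x, y, hx, hy, ?_⟩
  have hxEy : x ⬝ᵥ E *ᵥ y = ∑ j, |d j| := by
    rw [dotProduct_mulVec, ← mulVec_transpose, dotProduct_comm, hyd]
  have hμw : μ ≤ √n * ∑ i, |w i| :=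
    hww ▸ (le_abs_self _).trans (abs_dotProduct_le_mul_sum_abs hw)
  have hwd : ∑ i, |w i| ≤ √(m / μ) * ∑ j, |d j| := by
    rw [← hxw, dotProduct_mulVec, ← mulVec_transpose, dotProduct_comm]
    exact (le_abs_self _).trans (abs_dotProduct_le_mul_sum_abs hv_small)
  have hμd : μ ≤ √n * √(m / μ) * ∑ j, |d j| := by
    rw [mul_assoc]
    exact hμw.trans (mul_le_mul_of_nonneg_left hwd (Real.sqrt_nonneg _))
  have hsq : μ ^ 2 ≤ n * (m / μ) * (∑ j, |d j|) ^ 2 := by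
    have := pow_le_pow_left₀ hμ.le hμd 2
    rwa [mul_pow, mul_pow, Real.sq_sqrt (by positivity), Real.sq_sqrt (by positivity)] at this
  rw [mul_comm n, div_mul_eq_mul_div, div_mul_eq_mul_div, le_div_iff₀ hμ] at hsq
  rw [hxEy]
  linarith

theorem trace_transpose_mul_self_of_abs_eq_one (E : Matrix X Y ℝ) (hE : ∀ i j, |E i j| = 1) :
    (Eᵀ * E).trace = Fintype.card X * Fintype.card Y := by
  simp only [trace, diag, mul_apply, transpose_apply, ← abs_mul_abs_self (E _ _), hE]
  simp [mul_comm]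

theorem exists_sq_card_mul_le_rank_pow_three [Nonempty X] [Nonempty Y] (E : Matrix X Y ℝ)
    (hE : ∀ i j, |E i j| = 1) :
    ∃ (A : Finset X) (B : Finset Y), (Fintype.card X * Fintype.card Y : ℝ) ^ 2 ≤
      16 * (E.rank : ℝ) ^ 3 * (∑ i ∈ A, ∑ j ∈ B, E i j) ^ 2 := by
  classical
  have hH : (Eᵀ * E).IsHermitian := by simpa using isHermitian_conjTranspose_mul_self E
  obtain ⟨k, hk⟩ := hH.exists_trace_le_rank_mul_eigenvalues
  rw [rank_transpose_mul_self, E.trace_transpose_mul_self_of_abs_eq_one hE] at hk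
  set μ := hH.eigenvalues k
  set N : ℝ := Fintype.card X * Fintype.card Y
  have hN : 0 < N := by positivity
  have hμ : 0 < μ := pos_of_mul_pos_right (hN.trans_le hk) (Nat.cast_nonneg _)
  have hv : (hH.eigenvectorBasis k).ofLp ⬝ᵥ (hH.eigenvectorBasis k).ofLp = 1 := by
    have := hH.eigenvectorBasis.inner_eq_one k
    rwa [EuclideanSpace.inner_eq_star_dotProduct, star_trivial] at this
  obtain ⟨x, y, hx, hy, hxy⟩ := E.exists_pow_three_le_dotProduct_mulVec_sq
    (fun i j => (hE i j).le) hμ hv (hH.mulVec_eigenvectorBasis k)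
  obtain ⟨A, B, hAB⟩ := E.exists_abs_dotProduct_mulVec_le_four_mul_abs_sum hx hy
  refine ⟨A, B, le_of_mul_le_mul_right ?_ hN⟩
  calc N ^ 2 * N = N ^ 3 := by ring
    _ ≤ (E.rank * μ) ^ 3 := pow_le_pow_left₀ hN.le hk 3
    _ = E.rank ^ 3 * μ ^ 3 := mul_pow _ _ _
    _ ≤ E.rank ^ 3 * (N * |x ⬝ᵥ E *ᵥ y| ^ 2) := by rw [sq_abs]; gcongr
    _ ≤ E.rank ^ 3 * (N * (4 * |∑ i ∈ A, ∑ j ∈ B, E i j|) ^ 2) := by gcongr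
    _ = 16 * E.rank ^ 3 * (∑ i ∈ A, ∑ j ∈ B, E i j) ^ 2 * N := by rw [mul_pow, sq_abs]; ring

end Matrix

theorem abs_sum_sum_le_card_mul_card {X Y : Type*} (E : Matrix X Y ℝ) (hE : ∀ i j, |E i j| ≤ 1)
    (A : Finset X) (B : Finset Y) : |∑ i ∈ A, ∑ j ∈ B, E i j| ≤ A.card * B.card := by
  refine (abs_sum_le_sum_abs _ _).trans <|
    (sum_le_sum fun i _ => (abs_sum_le_sum_abs _ _).trans (sum_le_sum fun j _ => hE i j)).trans ?_
  simp

section SignMatrix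

variable {X Y : Type*}

def signMatrix (f : X → Y → Bool) : Matrix X Y ℝ :=
  of fun x y => if f x y then -1 else 1

theorem abs_signMatrix_apply (f : X → Y → Bool) (x : X) (y : Y) : |signMatrix f x y| = 1 := by
  by_cases h : f x y <;> simp [signMatrix, h]

theorem biasOn_eq_abs_sum_signMatrix (f : X → Y → Bool) (A : Finset X) (B : Finset Y) :
    biasOn f A B = |∑ x ∈ A, ∑ y ∈ B, signMatrix f x y| / (A.card * B.card) :=
  rfl

theorem rank_signMatrix_le [Fintype X] [Fintype Y] (f : X → Y → Bool) :
    (signMatrix f).rank ≤ rankOf f + 1 := by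
  have hsplit : signMatrix f =
      (-2 : ℝ) • of (fun x y => if f x y then (1 : ℝ) else 0) + vecMulVec 1 1 := by
    ext x y
    by_cases h : f x y <;> simp [signMatrix, vecMulVec, h]; norm_num
  rw [hsplit, rankOf]
  refine (rank_add_le _ _).trans (add_le_add (rank_smul_of_mem_nonZeroDivisors _ ?_).le
    (rank_vecMulVec_le _ _))
  exact mem_nonZeroDivisors_of_ne_zero (by norm_num)

theorem exists_card_mul_le_mul_abs_sum_signMatrix [Fintype X] [Fintype Y] [Nonempty X]
    [Nonempty Y] (f : X → Y → Bool) (hf : 1 ≤ rankOf f) :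
    ∃ (A : Finset X) (B : Finset Y), (Fintype.card X * Fintype.card Y : ℝ) ≤
      12 * (rankOf f : ℝ) ^ ((3 : ℝ) / 2) * |∑ x ∈ A, ∑ y ∈ B, signMatrix f x y| := by
  obtain ⟨A, B, hAB⟩ := (signMatrix f).exists_sq_card_mul_le_rank_pow_three (abs_signMatrix_apply f)
  have hr : (1 : ℝ) ≤ rankOf f := by exact_mod_cast hf
  have hρ : ((signMatrix f).rank : ℝ) ≤ 2 * rankOf f := by
    have : ((signMatrix f).rank : ℝ) ≤ rankOf f + 1 := by exact_mod_cast rank_signMatrix_le f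
    linarith
  have hr3 : ((rankOf f : ℝ) ^ ((3 : ℝ) / 2)) ^ 2 = (rankOf f : ℝ) ^ 3 := by
    rw [← Real.rpow_mul_natCast (by linarith)]
    norm_num
  refine ⟨A, B, (pow_le_pow_iff_left₀ (by positivity) (by positivity) two_ne_zero).1 ?_⟩
  calc (Fintype.card X * Fintype.card Y : ℝ) ^ 2
      ≤ 16 * ((signMatrix f).rank : ℝ) ^ 3 * (∑ x ∈ A, ∑ y ∈ B, signMatrix f x y) ^ 2 := hAB
    _ ≤ 16 * (2 * rankOf f) ^ 3 * (∑ x ∈ A, ∑ y ∈ B, signMatrix f x y) ^ 2 := by gcongr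
    _ = 128 * (rankOf f : ℝ) ^ 3 * (∑ x ∈ A, ∑ y ∈ B, signMatrix f x y) ^ 2 := by ring
    _ ≤ 144 * (rankOf f : ℝ) ^ 3 * (∑ x ∈ A, ∑ y ∈ B, signMatrix f x y) ^ 2 := by
        gcongr
        norm_num
    _ = (12 * (rankOf f : ℝ) ^ ((3 : ℝ) / 2) * |∑ x ∈ A, ∑ y ∈ B, signMatrix f x y|) ^ 2 := by
        rw [mul_pow, mul_pow, hr3, sq_abs]
        norm_num

end SignMatrix

/-- Nisan–Wigderson: there is `C > 0` so that every boolean function of rank `r ≥ 1` has a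
nonempty rectangle `R` of size `|R| ≥ |X × Y|/(C·r^{3/2})` with `bias(f|R) ≥ 1/(C·r^{3/2})`. -/
theorem low_rank_has_biased_rectangle :
    ∃ C : ℝ, 0 < C ∧
      ∀ (X Y : Type) [Fintype X] [Fintype Y] [Nonempty X] [Nonempty Y]
        (f : X → Y → Bool), 1 ≤ rankOf f →
        ∃ (A : Finset X) (B : Finset Y), A.Nonempty ∧ B.Nonempty ∧
          (Fintype.card X * Fintype.card Y : ℝ) / (C * (rankOf f : ℝ) ^ ((3 : ℝ) / 2)) ≤
            (A.card * B.card : ℝ) ∧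
          1 / (C * (rankOf f : ℝ) ^ ((3 : ℝ) / 2)) ≤ biasOn f A B := by
  refine ⟨12, by norm_num, fun X Y _ _ _ _ f hf => ?_⟩
  obtain ⟨A, B, hAB⟩ := exists_card_mul_le_mul_abs_sum_signMatrix f hf
  set S := ∑ x ∈ A, ∑ y ∈ B, signMatrix f x y
  set C := 12 * (rankOf f : ℝ) ^ ((3 : ℝ) / 2)
  have hC : 0 < C := by positivity
  have hS : (Fintype.card X * Fintype.card Y : ℝ) / C ≤ |S| := by
    rwa [div_le_iff₀' hC]
  have hS0 : S ≠ 0 := abs_pos.1 ((by positivity : (0 : ℝ) < _).trans_le hS)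
  obtain ⟨x, -, hx⟩ := exists_ne_zero_of_sum_ne_zero hS0
  have hA : A.Nonempty := nonempty_of_sum_ne_zero hS0
  have hB : B.Nonempty := nonempty_of_sum_ne_zero hx
  have hSAB : |S| ≤ A.card * B.card :=
    abs_sum_sum_le_card_mul_card _ (fun x y => (abs_signMatrix_apply f x y).le) A B
  have hABXY : (A.card * B.card : ℝ) ≤ Fintype.card X * Fintype.card Y := by
    gcongr <;> exact_mod_cast card_le_univ _
  refine ⟨A, B, hA, hB, hS.trans hSAB, ?_⟩
  rw [biasOn_eq_abs_sum_signMatrix, le_div_iff₀ (by positivity)]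
  calc 1 / C * (A.card * B.card) ≤ Fintype.card X * Fintype.card Y / C := by
        rw [one_div_mul_eq_div]; gcongr
    _ ≤ |S| := hS
end

section
/- There exists an absolute constant C > 0 with the following property. Let X, Y be finite nonempty sets, f : X × Y → {−1,1}, and δ ∈ (0,1] such that disc(f) ≥ δ, i.e., for every probability distribution σ on X × Y there exists a rectangle R with |Σ_{(x,y)∈R} f(x,y)·σ(x,y)| ≥ δ. Then for every ε ∈ (0,1/2] and every probability distribution μ on X × Y there exists a rectangle R with μ(R) ≥ 2^{−C·δ^{−1}·log₂(1/ε)} and |E_{μ|R}[f]| ≥ 1 − ε. -/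
/-!
Von Neumann's minimax theorem turns `disc(f) ≥ δ` into a margin: a convex combination `h` of
rectangle indicators with `h ≥ (1 + δ) / 2` where `f = 1` and `h ≤ (1 - δ) / 2` where `f = -1`.
Rectangles are closed under intersection, so `h ^ k` is again such a combination, and for
`k ≈ log₂ (1 / ε) / δ` it separates the two colour classes by a factor `ε`. Assuming (after
possibly replacing `f` by `-f`) that `f = 1` carries half of the mass of `μ`, averaging over
the rectangles in `h ^ k` finds one on which the `f = 1` mass exceeds `2 / ε` times the `f = -1`
mass by at least `((1 + δ) / 2) ^ k / 4 ≥ 2 ^ (-6 δ⁻¹ log₂ (1 / ε))`.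
-/

open Finset Real

section ConvexHull

variable {𝕜 A : Type*} [CommSemiring 𝕜] [PartialOrder 𝕜] [Semiring A] [Algebra 𝕜 A]
  {s : Set A}

theorem mul_mem_convexHull (hs : ∀ x ∈ s, ∀ y ∈ s, x * y ∈ s) {x y : A}
    (hx : x ∈ convexHull 𝕜 s) (hy : y ∈ convexHull 𝕜 s) : x * y ∈ convexHull 𝕜 s := by
  have hright : ∀ y ∈ s, ∀ x ∈ convexHull 𝕜 s, x * y ∈ convexHull 𝕜 s := fun y hy =>
    convexHull_min (fun x hx => subset_convexHull 𝕜 s (hs x hx y hy))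
      ((convex_convexHull 𝕜 s).linear_preimage (LinearMap.mulRight 𝕜 y))
  exact convexHull_min (fun y hy => hright y hy x hx)
    ((convex_convexHull 𝕜 s).linear_preimage (LinearMap.mulLeft 𝕜 x)) hy

theorem pow_mem_convexHull (hs : ∀ x ∈ s, ∀ y ∈ s, x * y ∈ s) (hs₁ : (1 : A) ∈ convexHull 𝕜 s)
    {x : A} (hx : x ∈ convexHull 𝕜 s) (k : ℕ) : x ^ k ∈ convexHull 𝕜 s := by
  induction k with
  | zero => rwa [pow_zero]
  | succ k ih => rw [pow_succ]; exact mul_mem_convexHull hs ih hx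

end ConvexHull

theorem exists_forall_le_of_forall_exists_le {ι : Type*} [Fintype ι] [Nonempty ι]
    {V : Set (ι → ℝ)} (hVc : Convex ℝ V) (hVk : IsCompact V) {δ : ℝ}
    (hV : ∀ σ ∈ stdSimplex ℝ ι, ∃ v ∈ V, δ ≤ σ ⬝ᵥ v) :
    ∃ v ∈ V, ∀ i, δ ≤ v i := by
  classical
  have hne : (stdSimplex ℝ ι).Nonempty := ⟨_, single_mem_stdSimplex ℝ (Classical.arbitrary ι)⟩
  obtain ⟨σ₀, hσ₀, v₀, hv₀, hsaddle⟩ := Sion.exists_isSaddlePointOn (f := fun σ v => σ ⬝ᵥ v)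
    hne (convex_stdSimplex ℝ ι) (isCompact_stdSimplex ℝ ι)
    (fun v _ => (continuous_id.dotProduct continuous_const).lowerSemicontinuous
      |>.lowerSemicontinuousOn _)
    (fun v _ => (((dotProductBilin ℝ ℝ).flip v).convexOn (convex_stdSimplex ℝ ι)).quasiconvexOn)
    hVc ((hV _ hne.some_mem).imp fun _ h => h.1) hVk
    (fun σ _ => (continuous_const.dotProduct continuous_id).upperSemicontinuous
      |>.upperSemicontinuousOn _)
    (fun σ _ => ((dotProductBilin ℝ ℝ σ).concaveOn hVc).quasiconcaveOn)
  refine ⟨v₀, hv₀, fun i => ?_⟩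
  obtain ⟨v, hv, hδv⟩ := hV σ₀ hσ₀
  calc δ ≤ σ₀ ⬝ᵥ v := hδv
    _ ≤ Pi.single i 1 ⬝ᵥ v₀ := hsaddle _ (single_mem_stdSimplex ℝ i) v hv
    _ = v₀ i := by rw [single_dotProduct, one_mul]

namespace Discrepancy

theorem one_sub_le_one_add_mul_two_rpow_neg {δ : ℝ} (hδ : 0 ≤ δ) :
    1 - δ ≤ (1 + δ) * (2 : ℝ) ^ (-δ) := by
  rcases le_total δ 1 with hδ1 | hδ1
  · have hexp : 1 - δ * log 2 ≤ (2 : ℝ) ^ (-δ) := by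
      rw [rpow_def_of_pos two_pos]
      linarith [add_one_le_exp (log 2 * -δ)]
    have hlog : log 2 ≤ 1 := by linarith [log_le_sub_one_of_pos (two_pos : (0 : ℝ) < 2)]
    nlinarith [mul_le_mul_of_nonneg_left hexp (by linarith : 0 ≤ 1 + δ),
      mul_nonneg hδ (sub_nonneg.2 hlog)]
  · nlinarith [rpow_pos_of_pos two_pos (-δ)]

theorem pow_le_mul_pow_of_logb_le {δ ε : ℝ} (hδ0 : 0 ≤ δ) (hδ1 : δ ≤ 1) (hε : 0 < ε) {k : ℕ}
    (hk : logb 2 (4 / ε) ≤ δ * k) :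
    ((1 - δ) / 2) ^ k ≤ ε / 4 * ((1 + δ) / 2) ^ k := by
  have hstep : (1 - δ) / 2 ≤ (1 + δ) / 2 * (2 : ℝ) ^ (-δ) := by
    linarith [one_sub_le_one_add_mul_two_rpow_neg hδ0]
  have hdecay : ((2 : ℝ) ^ (-δ)) ^ k ≤ ε / 4 := by
    calc ((2 : ℝ) ^ (-δ)) ^ k = (2 : ℝ) ^ (-(δ * k)) := by
          rw [← rpow_mul_natCast two_pos.le, neg_mul]
      _ ≤ (2 : ℝ) ^ (-logb 2 (4 / ε)) := rpow_le_rpow_of_exponent_le one_le_two (neg_le_neg hk)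
      _ = ε / 4 := by
          rw [rpow_neg two_pos.le, rpow_logb two_pos (by norm_num) (by positivity), inv_div]
  calc ((1 - δ) / 2) ^ k ≤ ((1 + δ) / 2 * (2 : ℝ) ^ (-δ)) ^ k :=
        pow_le_pow_left₀ (by linarith) hstep k
    _ = ((1 + δ) / 2) ^ k * ((2 : ℝ) ^ (-δ)) ^ k := mul_pow _ _ _
    _ ≤ ((1 + δ) / 2) ^ k * (ε / 4) := by gcongr
    _ = ε / 4 * ((1 + δ) / 2) ^ k := mul_comm _ _

theorem two_rpow_neg_le_pow {δ ε : ℝ} (hδ0 : 0 < δ) (hδ1 : δ ≤ 1) (hε0 : 0 < ε) (hε1 : ε ≤ 1 / 2)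
    {k : ℕ} (hk : (k : ℝ) ≤ logb 2 (4 / ε) / δ + 1) :
    (2 : ℝ) ^ (-(6 * δ⁻¹ * logb 2 (1 / ε))) ≤ ((1 + δ) / 2) ^ k / 4 := by
  set L := logb 2 (1 / ε)
  have hL : 1 ≤ L := by
    rw [← logb_self_eq_one one_lt_two]
    exact logb_le_logb_of_le one_lt_two two_pos (by rw [le_div_iff₀ hε0]; linarith)
  have h4 : logb 2 (4 / ε) = 2 + L := by
    rw [show 4 / ε = 2 ^ 2 * (1 / ε) by ring, logb_mul (by norm_num) (by positivity),
      logb_pow, logb_self_eq_one one_lt_two, mul_one, Nat.cast_ofNat]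
  have hd : 1 ≤ δ⁻¹ := (one_le_inv₀ hδ0).2 hδ1
  have hexp : (k : ℝ) + 2 ≤ 6 * δ⁻¹ * L := by
    rw [h4, div_eq_mul_inv] at hk
    nlinarith [mul_le_mul hd hL zero_le_one (by linarith)]
  calc (2 : ℝ) ^ (-(6 * δ⁻¹ * L)) ≤ (2 : ℝ) ^ (-((k : ℝ) + 2)) :=
        rpow_le_rpow_of_exponent_le one_le_two (neg_le_neg hexp)
    _ = (1 / 2) ^ k / 4 := by
        rw [rpow_neg two_pos.le, rpow_add two_pos, rpow_natCast, rpow_two, one_div_pow]; ring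
    _ ≤ ((1 + δ) / 2) ^ k / 4 := by gcongr; linarith

theorem near_monochromatic_of_le_sub {P M ε τ : ℝ} (hM : 0 ≤ M) (hε : 0 < ε) (hτ : 0 ≤ τ)
    (h : τ ≤ P - 2 / ε * M) : τ ≤ P + M ∧ (1 - ε) * (P + M) ≤ P - M := by
  have hεM : ε * (2 / ε * M) = 2 * M := by field_simp
  have := mul_le_mul_of_nonneg_left h hε.le
  constructor <;> nlinarith [mul_nonneg hε.le hτ, mul_nonneg hε.le hM]

variable {X Y : Type*}

noncomputable def rectIndicator (A : Finset X) (B : Finset Y) : X × Y → ℝ :=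
  Set.indicator ↑(A ×ˢ B) 1

theorem rectIndicator_mul [DecidableEq X] [DecidableEq Y] (A A' : Finset X) (B B' : Finset Y) :
    rectIndicator A B * rectIndicator A' B' = rectIndicator (A ∩ A') (B ∩ B') := by
  rw [rectIndicator, rectIndicator, rectIndicator, ← Set.inter_indicator_one, ← coe_inter,
    product_inter_product]

theorem rectIndicator_univ [Fintype X] [Fintype Y] :
    rectIndicator (univ : Finset X) (univ : Finset Y) = 1 := by
  simp [rectIndicator]

theorem rectIndicator_compl_add [Fintype X] [Fintype Y] [DecidableEq X] [DecidableEq Y]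
    (A : Finset X) (B : Finset Y) :
    rectIndicator Aᶜ univ + rectIndicator A Bᶜ = 1 - rectIndicator A B := by
  ext p
  by_cases hA : p.1 ∈ A <;> by_cases hB : p.2 ∈ B <;> simp [rectIndicator, hA, hB]

theorem dotProduct_rectIndicator [Fintype X] [Fintype Y] (χ : X × Y → ℝ) (A : Finset X)
    (B : Finset Y) : χ ⬝ᵥ rectIndicator A B = ∑ p ∈ A ×ˢ B, χ p := by
  classical
  simp only [dotProduct, rectIndicator, Set.indicator_apply, mem_coe, Pi.one_apply, mul_ite,
    mul_one, mul_zero, sum_ite_mem, univ_inter]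

variable (X Y) in
def rectHull : Set (X × Y → ℝ) :=
  convexHull ℝ (Set.range fun R : Finset X × Finset Y => rectIndicator R.1 R.2)

theorem rectIndicator_mem_rectHull (A : Finset X) (B : Finset Y) :
    rectIndicator A B ∈ rectHull X Y :=
  subset_convexHull ℝ _ ⟨(A, B), rfl⟩

theorem one_mem_rectHull [Fintype X] [Fintype Y] : (1 : X × Y → ℝ) ∈ rectHull X Y :=
  rectIndicator_univ (X := X) (Y := Y) ▸ rectIndicator_mem_rectHull _ _

theorem isCompact_rectHull [Finite X] [Finite Y] : IsCompact (rectHull X Y) :=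
  (Set.finite_range _).isCompact_convexHull ℝ

theorem nonneg_of_mem_rectHull {h : X × Y → ℝ} (hh : h ∈ rectHull X Y) : 0 ≤ h := by
  refine convexHull_min ?_ (convex_Ici (𝕜 := ℝ) 0) hh
  rintro _ ⟨R, rfl⟩
  exact Set.indicator_nonneg fun _ _ => zero_le_one

theorem pow_mem_rectHull [Fintype X] [Fintype Y] {h : X × Y → ℝ} (hh : h ∈ rectHull X Y)
    (k : ℕ) : h ^ k ∈ rectHull X Y := by
  classical
  refine pow_mem_convexHull ?_ one_mem_rectHull hh k
  rintro _ ⟨R, rfl⟩ _ ⟨S, rfl⟩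
  exact ⟨(R.1 ∩ S.1, R.2 ∩ S.2), (rectIndicator_mul ..).symm⟩

theorem half_one_add_mem_rectHull [Fintype X] [Fintype Y] (A : Finset X) (B : Finset Y) :
    (1 / 2 : ℝ) • (1 + rectIndicator A B) ∈ rectHull X Y := by
  have := convex_convexHull ℝ _ one_mem_rectHull (rectIndicator_mem_rectHull A B)
    (by norm_num : (0 : ℝ) ≤ 1 / 2) (by norm_num : (0 : ℝ) ≤ 1 / 2) (by norm_num)
  rwa [← smul_add] at this

theorem half_one_sub_mem_rectHull [Fintype X] [Fintype Y] (A : Finset X) (B : Finset Y) :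
    (1 / 2 : ℝ) • (1 - rectIndicator A B) ∈ rectHull X Y := by
  classical
  have := convex_convexHull ℝ _ (rectIndicator_mem_rectHull Aᶜ (univ : Finset Y))
    (rectIndicator_mem_rectHull A Bᶜ) (by norm_num : (0 : ℝ) ≤ 1 / 2)
    (by norm_num : (0 : ℝ) ≤ 1 / 2) (by norm_num)
  rwa [← smul_add, rectIndicator_compl_add] at this

theorem exists_dotProduct_le_sum_rect [Fintype X] [Fintype Y] {h : X × Y → ℝ}
    (hh : h ∈ rectHull X Y) (χ : X × Y → ℝ) :
    ∃ (A : Finset X) (B : Finset Y), χ ⬝ᵥ h ≤ ∑ p ∈ A ×ˢ B, χ p := by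
  obtain ⟨_, ⟨⟨A, B⟩, rfl⟩, hle⟩ := ((dotProductBilin ℝ ℝ χ).convexOn convex_univ)
    |>.exists_ge_of_mem_convexHull (Set.subset_univ _) hh
  exact ⟨A, B, dotProduct_rectIndicator χ A B ▸ hle⟩

/-- The minimax theorem applied to the image of `rectHull` under `h ↦ f * (2 h - 1)`, which
contains `± f * 1_R` as the images of `(1 ± 1_R) / 2`. -/
theorem exists_mem_rectHull_margin [Fintype X] [Fintype Y] [Nonempty X] [Nonempty Y]
    {f : X × Y → ℝ} {δ : ℝ}
    (hdisc : ∀ σ : X × Y → ℝ, (∀ p, 0 ≤ σ p) → ∑ p, σ p = 1 →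
      ∃ (A : Finset X) (B : Finset Y), δ ≤ |∑ p ∈ A ×ˢ B, f p * σ p|) :
    ∃ h ∈ rectHull X Y, ∀ p, δ ≤ f p * (2 * h p - 1) := by
  let T : (X × Y → ℝ) →ᵃ[ℝ] (X × Y → ℝ) :=
    { toFun := fun h => f * (2 • h - 1)
      linear := 2 • LinearMap.mulLeft ℝ f
      map_vadd' := fun h g => by ext p; simp; ring }
  have hV : ∀ σ ∈ stdSimplex ℝ (X × Y), ∃ v ∈ T '' rectHull X Y, δ ≤ σ ⬝ᵥ v := by
    intro σ hσ
    obtain ⟨A, B, hAB⟩ := hdisc σ hσ.1 hσ.2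
    have hsum : σ ⬝ᵥ (f * rectIndicator A B) = ∑ p ∈ A ×ˢ B, f p * σ p := by
      rw [← dotProduct_rectIndicator]
      exact sum_congr rfl fun p _ => by rw [Pi.mul_apply]; ring
    rcases le_abs'.1 hAB with hneg | hpos
    · refine ⟨_, ⟨_, half_one_sub_mem_rectHull A B, rfl⟩, ?_⟩
      have hT : T ((1 / 2 : ℝ) • (1 - rectIndicator A B)) = -(f * rectIndicator A B) := by
        ext p; simp [T]
      rw [hT, dotProduct_neg, hsum]
      linarith
    · refine ⟨_, ⟨_, half_one_add_mem_rectHull A B, rfl⟩, ?_⟩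
      have hT : T ((1 / 2 : ℝ) • (1 + rectIndicator A B)) = f * rectIndicator A B := by
        ext p; simp [T, mul_add]
      rwa [hT, hsum]
  obtain ⟨_, ⟨h, hh, rfl⟩, hmargin⟩ := exists_forall_le_of_forall_exists_le
    ((convex_convexHull ℝ _).affine_image T)
    (isCompact_rectHull.image T.continuous_of_finiteDimensional) hV
  exact ⟨h, hh, fun p => by simpa [T] using hmargin p⟩

/-- `μ p * (1 + f p) / 2` and `μ p * (1 - f p) / 2` are the parts of `μ` on `f = 1` and on
`f = -1`. -/
theorem exists_rect_sum_sub_ge [Fintype X] [Fintype Y] {f : X × Y → ℝ}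
    (hf : ∀ p, f p = 1 ∨ f p = -1) {h : X × Y → ℝ} (hh : h ∈ rectHull X Y) {δ : ℝ}
    (hδ0 : 0 ≤ δ) (hδ1 : δ ≤ 1) (hmargin : ∀ p, δ ≤ f p * (2 * h p - 1)) {μ : X × Y → ℝ}
    (hμ0 : ∀ p, 0 ≤ μ p) (hμ1 : ∑ p, μ p = 1) (hside : 1 / 2 ≤ ∑ p, μ p * (1 + f p) / 2)
    {K : ℝ} (hK : 0 ≤ K) (k : ℕ) :
    ∃ (A : Finset X) (B : Finset Y), ((1 + δ) / 2) ^ k / 2 - K * ((1 - δ) / 2) ^ k / 2 ≤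
      ∑ p ∈ A ×ˢ B, (μ p * (1 + f p) / 2 - K * (μ p * (1 - f p) / 2)) := by
  set χ : X × Y → ℝ := fun p => μ p * (1 + f p) / 2 - K * (μ p * (1 - f p) / 2)
  have hpoint : ∀ p, μ p * (1 + f p) / 2 * ((1 + δ) / 2) ^ k
      - K * ((1 - δ) / 2) ^ k * (μ p * (1 - f p) / 2) ≤ χ p * (h ^ k) p := by
    intro p
    have h0 := nonneg_of_mem_rectHull hh p
    have hm := hmargin p
    rcases hf p with hp | hp <;> simp only [χ, hp, Pi.pow_apply] at hm ⊢
    · have : ((1 + δ) / 2) ^ k ≤ h p ^ k := pow_le_pow_left₀ (by linarith) (by linarith) k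
      nlinarith [hμ0 p]
    · have : h p ^ k ≤ ((1 - δ) / 2) ^ k := pow_le_pow_left₀ h0 (by linarith) k
      nlinarith [mul_nonneg hK (hμ0 p)]
  have hsplit : ∑ p, μ p * (1 + f p) / 2 + ∑ p, μ p * (1 - f p) / 2 = ∑ p, μ p := by
    rw [← sum_add_distrib]
    exact sum_congr rfl fun p _ => by ring
  obtain ⟨A, B, hAB⟩ := exists_dotProduct_le_sum_rect (pow_mem_rectHull hh k) χ
  refine ⟨A, B, le_trans ?_ hAB⟩
  calc ((1 + δ) / 2) ^ k / 2 - K * ((1 - δ) / 2) ^ k / 2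
      ≤ (∑ p, μ p * (1 + f p) / 2) * ((1 + δ) / 2) ^ k
        - K * ((1 - δ) / 2) ^ k * ∑ p, μ p * (1 - f p) / 2 := by
        nlinarith [pow_nonneg (by linarith : 0 ≤ (1 + δ) / 2) k,
          mul_nonneg hK (pow_nonneg (by linarith : 0 ≤ (1 - δ) / 2) k)]
    _ = ∑ p, (μ p * (1 + f p) / 2 * ((1 + δ) / 2) ^ k
          - K * ((1 - δ) / 2) ^ k * (μ p * (1 - f p) / 2)) := by
        rw [sum_sub_distrib, sum_mul, mul_sum]
    _ ≤ χ ⬝ᵥ h ^ k := sum_le_sum fun p _ => hpoint p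

theorem exists_near_monochromatic_rect_of_margin [Fintype X] [Fintype Y] {f : X × Y → ℝ}
    (hf : ∀ p, f p = 1 ∨ f p = -1) {h : X × Y → ℝ} (hh : h ∈ rectHull X Y) {δ : ℝ}
    (hδ0 : 0 < δ) (hδ1 : δ ≤ 1) (hmargin : ∀ p, δ ≤ f p * (2 * h p - 1)) {ε : ℝ}
    (hε0 : 0 < ε) (hε1 : ε ≤ 1 / 2) {μ : X × Y → ℝ} (hμ0 : ∀ p, 0 ≤ μ p)
    (hμ1 : ∑ p, μ p = 1) (hside : 1 / 2 ≤ ∑ p, μ p * (1 + f p) / 2) :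
    ∃ (A : Finset X) (B : Finset Y),
      (2 : ℝ) ^ (-(6 * δ⁻¹ * logb 2 (1 / ε))) ≤ ∑ p ∈ A ×ˢ B, μ p ∧
      (1 - ε) * ∑ p ∈ A ×ˢ B, μ p ≤ |∑ p ∈ A ×ˢ B, μ p * f p| := by
  set k := ⌈logb 2 (4 / ε) / δ⌉₊
  have hk_ge : logb 2 (4 / ε) ≤ δ * k := (div_le_iff₀' hδ0).1 (Nat.le_ceil _)
  have hk_le : (k : ℝ) ≤ logb 2 (4 / ε) / δ + 1 := by
    refine (Nat.ceil_lt_add_one (div_nonneg (logb_nonneg one_lt_two ?_) hδ0.le)).le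
    rw [le_div_iff₀ hε0]; linarith
  obtain ⟨A, B, hAB⟩ := exists_rect_sum_sub_ge hf hh hδ0.le hδ1 hmargin hμ0 hμ1 hside
    (K := 2 / ε) (by positivity) k
  have hτ : ((1 + δ) / 2) ^ k / 4 ≤ ((1 + δ) / 2) ^ k / 2 - 2 / ε * ((1 - δ) / 2) ^ k / 2 := by
    have hεb : ε * (2 / ε * ((1 - δ) / 2) ^ k / 2) = ((1 - δ) / 2) ^ k := by field_simp
    nlinarith [pow_le_mul_pow_of_logb_le hδ0.le hδ1 hε0 hk_ge]
  set P := ∑ p ∈ A ×ˢ B, μ p * (1 + f p) / 2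
  set M := ∑ p ∈ A ×ˢ B, μ p * (1 - f p) / 2
  have hM : 0 ≤ M := sum_nonneg fun p _ => by
    rcases hf p with hp | hp <;> rw [hp] <;> linarith [hμ0 p]
  have hsub : ∑ p ∈ A ×ˢ B, (μ p * (1 + f p) / 2 - 2 / ε * (μ p * (1 - f p) / 2)) =
      P - 2 / ε * M := by
    rw [sum_sub_distrib, mul_sum]
  have hmass : ∑ p ∈ A ×ˢ B, μ p = P + M := by
    rw [← sum_add_distrib]; exact sum_congr rfl fun p _ => by ring
  have hbias : ∑ p ∈ A ×ˢ B, μ p * f p = P - M := by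
    rw [← sum_sub_distrib]; exact sum_congr rfl fun p _ => by ring
  obtain ⟨hdense, hmono⟩ := near_monochromatic_of_le_sub hM hε0 (by positivity)
    (hτ.trans (hAB.trans_eq hsub))
  refine ⟨A, B, ?_, ?_⟩
  · rw [hmass]; exact (two_rpow_neg_le_pow hδ0 hδ1 hε0 hε1 hk_le).trans hdense
  · rw [hmass, hbias]; exact hmono.trans (le_abs_self _)

theorem exists_near_monochromatic_rect [Fintype X] [Fintype Y] [Nonempty X] [Nonempty Y]
    {f : X × Y → ℝ} (hf : ∀ p, f p = 1 ∨ f p = -1) {δ : ℝ} (hδ0 : 0 < δ) (hδ1 : δ ≤ 1)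
    (hdisc : ∀ σ : X × Y → ℝ, (∀ p, 0 ≤ σ p) → ∑ p, σ p = 1 →
      ∃ (A : Finset X) (B : Finset Y), δ ≤ |∑ p ∈ A ×ˢ B, f p * σ p|)
    {ε : ℝ} (hε0 : 0 < ε) (hε1 : ε ≤ 1 / 2) {μ : X × Y → ℝ} (hμ0 : ∀ p, 0 ≤ μ p)
    (hμ1 : ∑ p, μ p = 1) :
    ∃ (A : Finset X) (B : Finset Y),
      (2 : ℝ) ^ (-(6 * δ⁻¹ * logb 2 (1 / ε))) ≤ ∑ p ∈ A ×ˢ B, μ p ∧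
      (1 - ε) * ∑ p ∈ A ×ˢ B, μ p ≤ |∑ p ∈ A ×ˢ B, μ p * f p| := by
  rcases le_total (1 / 2) (∑ p, μ p * (1 + f p) / 2) with hside | hside
  · obtain ⟨h, hh, hmargin⟩ := exists_mem_rectHull_margin hdisc
    exact exists_near_monochromatic_rect_of_margin hf hh hδ0 hδ1 hmargin hε0 hε1 hμ0 hμ1 hside
  · obtain ⟨h, hh, hmargin⟩ := exists_mem_rectHull_margin (f := -f) fun σ hσ0 hσ1 => by
      simpa [neg_mul, sum_neg_distrib, abs_neg] using hdisc σ hσ0 hσ1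
    have hside' : 1 / 2 ≤ ∑ p, μ p * (1 + (-f) p) / 2 := by
      have : ∑ p, μ p * (1 + f p) / 2 + ∑ p, μ p * (1 + (-f) p) / 2 = ∑ p, μ p := by
        rw [← sum_add_distrib]; exact sum_congr rfl fun p _ => by rw [Pi.neg_apply]; ring
      linarith
    obtain ⟨A, B, hdense, hmono⟩ := exists_near_monochromatic_rect_of_margin (f := -f)
      (fun p => by simpa [neg_eq_iff_eq_neg, or_comm] using hf p) hh hδ0 hδ1 hmargin hε0 hε1
      hμ0 hμ1 hside'
    exact ⟨A, B, hdense, by simpa [mul_neg, sum_neg_distrib, abs_neg] using hmono⟩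

end Discrepancy

/-- If `f : X × Y → {−1,1}` has discrepancy at least `δ` (against every distribution there is a
rectangle with correlation at least `δ`), then for every `ε ∈ (0,1/2]` and every distribution `μ`
there is a rectangle `R` with `μ(R) ≥ 2^{−C·δ⁻¹·log₂(1/ε)}` and `|E_{μ|R}[f]| ≥ 1 − ε`. -/
theorem high_discrepancy_gives_near_monochromatic_rectangle :
    ∃ C : ℝ, 0 < C ∧
      ∀ (X Y : Type) [Fintype X] [Fintype Y] [Nonempty X] [Nonempty Y]
        (f : X → Y → ℝ), (∀ x y, f x y = 1 ∨ f x y = -1) →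
        ∀ δ : ℝ, 0 < δ → δ ≤ 1 →
        (∀ σ : X × Y → ℝ, (∀ p, 0 ≤ σ p) → (∑ p : X × Y, σ p) = 1 →
          ∃ (A : Finset X) (B : Finset Y),
            δ ≤ |∑ p ∈ A ×ˢ B, f p.1 p.2 * σ p|) →
        ∀ ε : ℝ, 0 < ε → ε ≤ 1 / 2 →
        ∀ μ : X × Y → ℝ, (∀ p, 0 ≤ μ p) → (∑ p : X × Y, μ p) = 1 →
        ∃ (A : Finset X) (B : Finset Y),
          (2 : ℝ) ^ (-(C * δ⁻¹ * Real.logb 2 (1 / ε))) ≤ (∑ p ∈ A ×ˢ B, μ p) ∧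
          (1 - ε) * (∑ p ∈ A ×ˢ B, μ p) ≤ |∑ p ∈ A ×ˢ B, μ p * f p.1 p.2| :=
  ⟨6, by norm_num, fun _ _ _ _ _ _ f hf _ hδ0 hδ1 hdisc _ hε0 hε1 _ hμ0 hμ1 =>
    Discrepancy.exists_near_monochromatic_rect (f := fun p => f p.1 p.2) (fun p => hf p.1 p.2)
      hδ0 hδ1 hdisc hε0 hε1 hμ0 hμ1⟩
end

section
/- Let X, Y be finite nonempty sets, f : X × Y → {−1,1} with f⁻¹(1) and f⁻¹(−1) both nonempty, and δ > 0. Suppose that for every probability distribution σ on X × Y with Σ_{(x,y)} σ(x,y)·f(x,y) = 0 there exists a rectangle R with Σ_{(x,y)∈R} σ(x,y)·f(x,y) ≥ δ/3. Then there exists a probability distribution ρ on the (finite) set of all rectangles of X × Y such that for every (x₁,y₁) with f(x₁,y₁) = 1 and every (x₂,y₂) with f(x₂,y₂) = −1, Pr_{R∼ρ}[(x₁,y₁) ∈ R] − Pr_{R∼ρ}[(x₂,y₂) ∈ R] ≥ (2/3)·δ. -/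
/-!
Consider the zero-sum game in which one player picks a rectangle `R`, the other a pair `(p₁, p₂)`
of a `1`-input and a `(-1)`-input of `f`, with payoff `1_R(p₁) - 1_R(p₂)`. By von Neumann's
minimax theorem it suffices that every mixed strategy `τ` on pairs is answered by a rectangle of
payoff at least `2δ/3`. Averaging the two endpoint marginals of `τ` gives a distribution `σ` with
`∑ σ f = 0`, and the correlation of `f` with any rectangle under `σ` is half the payoff of that
rectangle against `τ`, so the hypothesis provides such a rectangle.
-/

open Matrix

theorem exists_mem_stdSimplex_le_vecMul {ι κ : Type*} [Fintype ι] [Fintype κ] [Nonempty κ]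
    (M : Matrix ι κ ℝ) (c : ℝ) (h : ∀ τ ∈ stdSimplex ℝ κ, ∃ i, c ≤ (M *ᵥ τ) i) :
    ∃ ρ ∈ stdSimplex ℝ ι, ∀ k, c ≤ (ρ ᵥ* M) k := by
  classical
  -- a row `i₀` exists, so that the simplex on `ι` is nonempty
  obtain ⟨i₀, -⟩ := h _ (single_mem_stdSimplex ℝ (Classical.arbitrary κ))
  obtain ⟨τ, hτ, ρ, hρ, hsaddle⟩ := Sion.exists_isSaddlePointOn (f := fun τ ρ => ρ ⬝ᵥ M *ᵥ τ)
    ⟨_, single_mem_stdSimplex ℝ (Classical.arbitrary κ)⟩ (convex_stdSimplex ℝ κ)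
    (isCompact_stdSimplex ℝ κ)
    (fun ρ _ => (Continuous.continuousOn (by fun_prop)).lowerSemicontinuousOn)
    (fun ρ _ =>
      ((dotProductBilin ℝ ℝ ρ ∘ₗ M.mulVecLin).convexOn (convex_stdSimplex ℝ κ)).quasiconvexOn)
    (convex_stdSimplex ℝ ι) ⟨_, single_mem_stdSimplex ℝ i₀⟩ (isCompact_stdSimplex ℝ ι)
    (fun τ _ => (Continuous.continuousOn (by fun_prop)).upperSemicontinuousOn)
    (fun τ _ =>
      (((dotProductBilin ℝ ℝ).flip (M *ᵥ τ)).concaveOn (convex_stdSimplex ℝ ι)).quasiconcaveOn)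
  refine ⟨ρ, hρ, fun k => ?_⟩
  obtain ⟨i, hi⟩ := h τ hτ
  calc c ≤ (M *ᵥ τ) i := hi
    _ = Pi.single i 1 ⬝ᵥ M *ᵥ τ := by rw [single_one_dotProduct]
    _ ≤ ρ ⬝ᵥ M *ᵥ Pi.single k 1 :=
      hsaddle _ (single_mem_stdSimplex ℝ k) _ (single_mem_stdSimplex ℝ i)
    _ = (ρ ᵥ* M) k := by rw [dotProduct_mulVec, dotProduct_single_one]

section EndpointMix
variable {α κ : Type*} [Fintype α] [DecidableEq α] [Fintype κ]

noncomputable def endpointMix (u v : κ → α) (τ : κ → ℝ) (p : α) : ℝ :=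
  (∑ k with u k = p, τ k + ∑ k with v k = p, τ k) / 2

omit [Fintype α] in
lemma endpointMix_nonneg (u v : κ → α) {τ : κ → ℝ} (hτ : ∀ k, 0 ≤ τ k) (p : α) :
    0 ≤ endpointMix u v τ p := by
  unfold endpointMix
  have := Finset.sum_nonneg fun k (_ : k ∈ Finset.univ.filter (u · = p)) => hτ k
  have := Finset.sum_nonneg fun k (_ : k ∈ Finset.univ.filter (v · = p)) => hτ k
  positivity

lemma sum_sum_fiber_mul (u : κ → α) (τ : κ → ℝ) (g : α → ℝ) :
    ∑ p, (∑ k with u k = p, τ k) * g p = ∑ k, τ k * g (u k) := by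
  rw [← Finset.sum_fiberwise Finset.univ u (fun k => τ k * g (u k))]
  refine Finset.sum_congr rfl fun p _ => ?_
  rw [Finset.sum_mul]
  exact Finset.sum_congr rfl fun k hk => by rw [(Finset.mem_filter.1 hk).2]

lemma sum_endpointMix_mul (u v : κ → α) (τ : κ → ℝ) (g : α → ℝ) :
    ∑ p, endpointMix u v τ p * g p = (∑ k, τ k * (g (u k) + g (v k))) / 2 := by
  simp only [endpointMix, div_mul_eq_mul_div, add_mul, ← Finset.sum_div, Finset.sum_add_distrib,
    sum_sum_fiber_mul, mul_add]

lemma sum_endpointMix (u v : κ → α) {τ : κ → ℝ} (hτ : ∑ k, τ k = 1) :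
    ∑ p, endpointMix u v τ p = 1 := by
  simpa [← Finset.sum_mul, hτ] using sum_endpointMix_mul u v τ 1

end EndpointMix

section Rectangles
variable {X Y : Type} [DecidableEq X] [DecidableEq Y]

def rectIndicator (R : Finset X × Finset Y) (p : X × Y) : ℝ :=
  if p.1 ∈ R.1 ∧ p.2 ∈ R.2 then 1 else 0

abbrev SignPair (f : X → Y → ℝ) :=
  {q : (X × Y) × (X × Y) // f q.1.1 q.1.2 = 1 ∧ f q.2.1 q.2.2 = -1}

def coverGap (f : X → Y → ℝ) : Matrix (Finset X × Finset Y) (SignPair f) ℝ :=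
  fun R q => rectIndicator R q.1.1 - rectIndicator R q.1.2

variable [Fintype X] [Fintype Y] (f : X → Y → ℝ) (τ : SignPair f → ℝ)

lemma sum_endpointMix_mul_sign :
    ∑ p, endpointMix (·.1.1) (·.1.2) τ p * f p.1 p.2 = 0 := by
  rw [sum_endpointMix_mul, Finset.sum_eq_zero fun k _ => by rw [k.2.1, k.2.2]; ring, zero_div]

lemma sum_rect_endpointMix_mul_sign (A : Finset X) (B : Finset Y) :
    ∑ p ∈ A ×ˢ B, endpointMix (·.1.1) (·.1.2) τ p * f p.1 p.2 = (coverGap f *ᵥ τ) (A, B) / 2 := by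
  have hind : ∀ p : X × Y,
      (if p ∈ A ×ˢ B then endpointMix (·.1.1) (·.1.2) τ p * f p.1 p.2 else 0) =
        endpointMix (·.1.1) (·.1.2) τ p * (rectIndicator (A, B) p * f p.1 p.2) := by
    intro p
    simp only [rectIndicator, Finset.mem_product, ite_mul, one_mul, zero_mul, mul_ite, mul_zero]
  rw [← Fintype.sum_ite_mem, Finset.sum_congr rfl fun p _ => hind p, sum_endpointMix_mul]
  congr 1
  refine Finset.sum_congr rfl fun k _ => ?_
  rw [k.2.1, k.2.2]
  simp only [coverGap]
  ring

end Rectangles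

theorem minimax_distribution_on_rectangles_general
    (X Y : Type) [Fintype X] [Fintype Y] [DecidableEq X] [DecidableEq Y]
    (f : X → Y → ℝ)
    (hpos : ∃ p : X × Y, f p.1 p.2 = 1) (hneg : ∃ p : X × Y, f p.1 p.2 = -1)
    (δ : ℝ)
    (hcorr : ∀ σ : X × Y → ℝ, (∀ p, 0 ≤ σ p) → (∑ p : X × Y, σ p) = 1 →
      (∑ p : X × Y, σ p * f p.1 p.2) = 0 →
      ∃ (A : Finset X) (B : Finset Y), δ / 3 ≤ (∑ p ∈ A ×ˢ B, σ p * f p.1 p.2)) :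
    ∃ ρ : Finset X × Finset Y → ℝ,
      (∀ R, 0 ≤ ρ R) ∧ (∑ R : Finset X × Finset Y, ρ R) = 1 ∧
      ∀ x₁ y₁ x₂ y₂, f x₁ y₁ = 1 → f x₂ y₂ = -1 →
        (2 / 3) * δ ≤
          (∑ R : Finset X × Finset Y, if x₁ ∈ R.1 ∧ y₁ ∈ R.2 then ρ R else 0) -
          (∑ R : Finset X × Finset Y, if x₂ ∈ R.1 ∧ y₂ ∈ R.2 then ρ R else 0) := by
  obtain ⟨p₁, hp₁⟩ := hpos
  obtain ⟨p₂, hp₂⟩ := hneg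
  have : Nonempty (SignPair f) := ⟨⟨(p₁, p₂), hp₁, hp₂⟩⟩
  obtain ⟨ρ, hρ, hgap⟩ := exists_mem_stdSimplex_le_vecMul (coverGap f) (2 / 3 * δ) fun τ hτ => by
    have hσ_nonneg := endpointMix_nonneg (fun k : SignPair f => k.1.1) (fun k => k.1.2) hτ.1
    have hσ_sum := sum_endpointMix (fun k : SignPair f => k.1.1) (fun k => k.1.2) hτ.2
    obtain ⟨A, B, hAB⟩ := hcorr _ hσ_nonneg hσ_sum (sum_endpointMix_mul_sign f τ)
    rw [sum_rect_endpointMix_mul_sign] at hAB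
    exact ⟨(A, B), by linarith⟩
  refine ⟨ρ, hρ.1, hρ.2, fun x₁ y₁ x₂ y₂ h₁ h₂ => ?_⟩
  convert hgap ⟨((x₁, y₁), (x₂, y₂)), h₁, h₂⟩ using 1
  simp [vecMul, dotProduct, coverGap, rectIndicator, mul_sub, Finset.sum_sub_distrib]

/-- Via the minimax theorem: if for every balanced distribution `σ` some rectangle has
correlation at least `δ/3` with `f`, then there is a distribution `ρ` on rectangles such that
every `1`-input of `f` is covered with probability exceeding that of every `(−1)`-input by at
least `(2/3)·δ`. -/
theorem minimax_distribution_on_rectangles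
    (X Y : Type) [Fintype X] [Fintype Y] [Nonempty X] [Nonempty Y] [DecidableEq X] [DecidableEq Y]
    (f : X → Y → ℝ) (hf : ∀ x y, f x y = 1 ∨ f x y = -1)
    (hpos : ∃ p : X × Y, f p.1 p.2 = 1) (hneg : ∃ p : X × Y, f p.1 p.2 = -1)
    (δ : ℝ) (hδ : 0 < δ)
    (hcorr : ∀ σ : X × Y → ℝ, (∀ p, 0 ≤ σ p) → (∑ p : X × Y, σ p) = 1 →
      (∑ p : X × Y, σ p * f p.1 p.2) = 0 →
      ∃ (A : Finset X) (B : Finset Y), δ / 3 ≤ (∑ p ∈ A ×ˢ B, σ p * f p.1 p.2)) :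
    ∃ ρ : Finset X × Finset Y → ℝ,
      (∀ R, 0 ≤ ρ R) ∧ (∑ R : Finset X × Finset Y, ρ R) = 1 ∧
      ∀ x₁ y₁ x₂ y₂, f x₁ y₁ = 1 → f x₂ y₂ = -1 →
        (2 / 3) * δ ≤
          (∑ R : Finset X × Finset Y, if x₁ ∈ R.1 ∧ y₁ ∈ R.2 then ρ R else 0) -
          (∑ R : Finset X × Finset Y, if x₂ ∈ R.1 ∧ y₂ ∈ R.2 then ρ R else 0) :=
  minimax_distribution_on_rectangles_general X Y f hpos hneg δ hcorr
end

section
/- Let X, Y be finite nonempty sets and f : X × Y → {0,1}. If X × Y can be partitioned into N rectangles, each of which is monochromatic for f, then rank(f) ≤ N. -/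
namespace Matrix

variable {X Y R : Type*}

def restrictRect [DecidableEq X] [DecidableEq Y] [Zero R] (M : Matrix X Y R)
    (A : Finset X) (B : Finset Y) : Matrix X Y R :=
  of fun x y => if x ∈ A ∧ y ∈ B then M x y else 0

theorem rank_sum_le {K ι : Type*} [Field K] [Fintype Y] (s : Finset ι)
    (M : ι → Matrix X Y K) : (∑ i ∈ s, M i).rank ≤ ∑ i ∈ s, (M i).rank := by
  have rank_eq (A : Matrix X Y K) : (A.rank : Cardinal) = A.mulVecLin.rank := by
    rw [rank, LinearMap.rank, Module.finrank_eq_rank]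
  have h := LinearMap.rank_finsetSum_le s (fun i => (M i).mulVecLin)
  rw [← map_sum (mulVecBilin K K)] at h
  simp only [← rank_eq] at h
  exact_mod_cast h

variable [DecidableEq X] [DecidableEq Y]

theorem rank_restrictRect_le_one [CommSemiring R] [StrongRankCondition R] [Fintype Y]
    (M : Matrix X Y R) (A : Finset X) (B : Finset Y)
    (hrow : ∀ x ∈ A, ∀ y ∈ B, ∀ y' ∈ B, M x y = M x y') :
    (M.restrictRect A B).rank ≤ 1 := by
  rcases B.eq_empty_or_nonempty with rfl | ⟨y₀, hy₀⟩
  · have hzero : M.restrictRect A ∅ = vecMulVec 0 0 := by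
      ext x y
      simp [restrictRect]
    rw [hzero]
    exact rank_vecMulVec_le _ _
  · have hprod : M.restrictRect A B =
        vecMulVec (fun x => if x ∈ A then M x y₀ else 0) (fun y => if y ∈ B then 1 else 0) := by
      ext x y
      by_cases hx : x ∈ A
      · by_cases hy : y ∈ B
        · simp [restrictRect, vecMulVec_apply, hx, hy, hrow x hx y hy y₀ hy₀]
        · simp [restrictRect, vecMulVec_apply, hy]
      · simp [restrictRect, vecMulVec_apply, hx]
    rw [hprod]
    exact rank_vecMulVec_le _ _

theorem sum_restrictRect_of_partition [AddCommMonoid R] {ι : Type*} [Fintype ι]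
    (M : Matrix X Y R) (rect : ι → Finset X × Finset Y)
    (hpart : ∀ p : X × Y, ∃! i, p.1 ∈ (rect i).1 ∧ p.2 ∈ (rect i).2) :
    ∑ i, M.restrictRect (rect i).1 (rect i).2 = M := by
  ext x y
  obtain ⟨i, hi, huniq⟩ := hpart (x, y)
  rw [sum_apply, Finset.sum_eq_single i]
  · simp [restrictRect, hi.1, hi.2]
  · intro j _ hji
    have hnot : ¬(x ∈ (rect j).1 ∧ y ∈ (rect j).2) := fun h => hji (huniq j h)
    simp only [restrictRect, of_apply, if_neg hnot]
  · simp

theorem rank_le_card_of_rowConst_on_partition {K ι : Type*} [Field K] [Fintype Y]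
    [Fintype ι] (M : Matrix X Y K) (rect : ι → Finset X × Finset Y)
    (hpart : ∀ p : X × Y, ∃! i, p.1 ∈ (rect i).1 ∧ p.2 ∈ (rect i).2)
    (hrow : ∀ i, ∀ x ∈ (rect i).1, ∀ y ∈ (rect i).2, ∀ y' ∈ (rect i).2, M x y = M x y') :
    M.rank ≤ Fintype.card ι :=
  calc M.rank = (∑ i, M.restrictRect (rect i).1 (rect i).2).rank := by
        rw [sum_restrictRect_of_partition M rect hpart]
    _ ≤ ∑ i, (M.restrictRect (rect i).1 (rect i).2).rank := rank_sum_le _ _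
    _ ≤ ∑ _i : ι, 1 := Finset.sum_le_sum fun i _ => rank_restrictRect_le_one M _ _ (hrow i)
    _ = Fintype.card ι := by simp

end Matrix

theorem rank_le_number_of_monochromatic_rectangles_general
    (X Y : Type) [Fintype X] [Fintype Y]
    (f : X → Y → Bool) (N : ℕ) (R : Fin N → Finset X × Finset Y)
    (hpart : ∀ p : X × Y, ∃! i : Fin N, p.1 ∈ (R i).1 ∧ p.2 ∈ (R i).2)
    (hmono : ∀ i : Fin N, ∀ x ∈ (R i).1, ∀ y ∈ (R i).2, ∀ x' ∈ (R i).1, ∀ y' ∈ (R i).2,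
      f x y = f x' y') :
    rankOf f ≤ N := by
  classical
  simpa [rankOf] using Matrix.rank_le_card_of_rowConst_on_partition _ R hpart
    fun i x hx y hy y' hy' => by simp only [Matrix.of_apply, hmono i x hx y hy x hx y' hy']

/-- If `X × Y` is partitioned into `N` rectangles, each monochromatic for `f`, then
`rank(f) ≤ N`. -/
theorem rank_le_number_of_monochromatic_rectangles
    (X Y : Type) [Fintype X] [Fintype Y] [Nonempty X] [Nonempty Y]
    (f : X → Y → Bool) (N : ℕ) (R : Fin N → Finset X × Finset Y)
    (hpart : ∀ p : X × Y, ∃! i : Fin N, p.1 ∈ (R i).1 ∧ p.2 ∈ (R i).2)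
    (hmono : ∀ i : Fin N, ∀ x ∈ (R i).1, ∀ y ∈ (R i).2, ∀ x' ∈ (R i).1, ∀ y' ∈ (R i).2,
      f x y = f x' y') :
    rankOf f ≤ N :=
  rank_le_number_of_monochromatic_rectangles_general X Y f N R hpart hmono
end

section
/- For every integer r ≥ 100, let w = ⌊√r/10⌋ and let A = {x ∈ F_2^r : x has exactly w nonzero coordinates}. Then the pair (A, A) is 0.98-approximate dual; in fact E_{a,b∈A}[(−1)^{⟨a,b⟩}] ≥ 0.98, where a and b are independent and uniform in A. -/
/-- `w r = ⌊√r / 10⌋`. -/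
noncomputable def wt (r : ℕ) : ℕ := ⌊Real.sqrt r / 10⌋₊

/-- The set of vectors in `𝔽₂ʳ` with exactly `wt r` nonzero coordinates. -/
noncomputable def hammingSlice (r : ℕ) : Finset (Fin r → ZMod 2) :=
  Finset.univ.filter (fun x => (Finset.univ.filter (fun i => x i ≠ 0)).card = wt r)

lemma wt_sq_le (r : ℕ) : 100 * (wt r)^2 ≤ r := by
  have h0 : (0:ℝ) ≤ Real.sqrt r / 10 := by positivity
  have h1 : (wt r : ℝ) ≤ Real.sqrt r / 10 := Nat.floor_le h0
  have h3 : ((100 * (wt r)^2 : ℕ) : ℝ) ≤ (r:ℝ) := by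
    norm_num
    nlinarith [Real.sq_sqrt (by positivity : (0:ℝ) ≤ (r:ℝ)), Real.sqrt_nonneg (r:ℝ),
      Nat.cast_nonneg (α := ℝ) (wt r)]
  exact_mod_cast h3

lemma wt_lt (r : ℕ) (hr : 100 ≤ r) : wt r < r := by
  have h := wt_sq_le r
  rcases Nat.eq_zero_or_pos (wt r) with h0 | h0
  · omega
  · nlinarith [Nat.le_self_pow (two_ne_zero) (wt r)]

lemma slice_nonempty (r : ℕ) (hr : 100 ≤ r) : (hammingSlice r).Nonempty := by
  refine ⟨fun i => if (i : ℕ) < wt r then 1 else 0, ?_⟩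
  simp only [hammingSlice, Finset.mem_filter, Finset.mem_univ, true_and]
  have he : (Finset.univ.filter fun i : Fin r =>
        ¬((if (i:ℕ) < wt r then (1:ZMod 2) else 0) = 0))
      = Finset.Iio (⟨wt r, wt_lt r hr⟩ : Fin r) := by
    ext i
    by_cases h : (i:ℕ) < wt r <;> simp [h, Fin.lt_def]
  rw [he, Fin.card_Iio]

lemma weight_comp (r : ℕ) (a : Fin r → ZMod 2) (σ : Equiv.Perm (Fin r)) :
    (Finset.univ.filter fun k => a (σ k) ≠ 0).card
      = (Finset.univ.filter fun k => a k ≠ 0).card := by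
  have he : (Finset.univ.filter fun k => a (σ k) ≠ 0)
      = (Finset.univ.filter fun k => a k ≠ 0).map σ.symm.toEmbedding := by
    ext k
    simp [Equiv.symm_apply_eq]
  rw [he, Finset.card_map]

lemma comp_mem_slice {r : ℕ} {a : Fin r → ZMod 2} (ha : a ∈ hammingSlice r)
    (σ : Equiv.Perm (Fin r)) : (fun k => a (σ k)) ∈ hammingSlice r := by
  simp only [hammingSlice, Finset.mem_filter, Finset.mem_univ, true_and] at *
  rw [weight_comp]
  exact ha

lemma count_coord_eq (r : ℕ) (i j : Fin r) :
    ((hammingSlice r).filter fun a => a i ≠ 0).card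
      = ((hammingSlice r).filter fun a => a j ≠ 0).card := by
  apply Finset.card_bij' (fun a _ => fun k => a (Equiv.swap i j k))
    (fun a _ => fun k => a (Equiv.swap i j k))
  · intro a ha
    simp only [Finset.mem_filter] at ha ⊢
    refine ⟨comp_mem_slice ha.1 _, ?_⟩
    rw [Equiv.swap_apply_right]
    exact ha.2
  · intro a ha
    simp only [Finset.mem_filter] at ha ⊢
    refine ⟨comp_mem_slice ha.1 _, ?_⟩
    rw [Equiv.swap_apply_left]
    exact ha.2
  · intro a _
    funext k
    simp [Equiv.swap_apply_self]
  · intro a _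
    funext k
    simp [Equiv.swap_apply_self]

lemma sum_count (r : ℕ) :
    ∑ i : Fin r, ((hammingSlice r).filter fun a => a i ≠ 0).card
      = (hammingSlice r).card * wt r := by
  have h1 : ∀ i : Fin r, ((hammingSlice r).filter fun a => a i ≠ 0).card
      = ∑ a ∈ hammingSlice r, if a i ≠ 0 then 1 else 0 := fun i =>
    Finset.card_filter _ _
  calc ∑ i : Fin r, ((hammingSlice r).filter fun a => a i ≠ 0).card
      = ∑ i : Fin r, ∑ a ∈ hammingSlice r, if a i ≠ 0 then 1 else 0 := by
        simp_rw [h1]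
    _ = ∑ a ∈ hammingSlice r, ∑ i : Fin r, if a i ≠ 0 then 1 else 0 :=
        Finset.sum_comm
    _ = ∑ a ∈ hammingSlice r, wt r := by
        apply Finset.sum_congr rfl
        intro a ha
        rw [← Finset.card_filter]
        simpa [hammingSlice] using ha
    _ = (hammingSlice r).card * wt r := by
        rw [Finset.sum_const, smul_eq_mul]

/-- For `r ≥ 100` and `A` the set of vectors of Hamming weight `⌊√r/10⌋` in `𝔽₂ʳ`, the pair
`(A, A)` is `0.98`-approximate dual; in fact `E_{a,b∈A}[(−1)^{⟨a,b⟩}] ≥ 0.98`. -/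
theorem hamming_slice_approx_dual (r : ℕ) (hr : 100 ≤ r) :
    (0.98 : ℝ) ≤
      (∑ a ∈ hammingSlice r, ∑ b ∈ hammingSlice r,
          (if (∑ i, a i * b i) = (0 : ZMod 2) then (1 : ℝ) else -1)) /
        ((hammingSlice r).card * (hammingSlice r).card) := by
  set A := hammingSlice r with hA
  set N := A.card with hN
  set w := wt r with hw
  have hNpos : 0 < N := Finset.card_pos.mpr (slice_nonempty r hr)
  have hrpos : 0 < r := by omega
  -- coordinate counts
  set c : Fin r → ℕ := fun i => (A.filter fun a => a i ≠ 0).card with hc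
  have hi0 : (0 : ℕ) < r := hrpos
  set i0 : Fin r := ⟨0, hi0⟩ with hi0def
  have hceq : ∀ i : Fin r, c i = c i0 := fun i => count_coord_eq r i i0
  have hsum : r * c i0 = N * w := by
    have := sum_count r
    rw [show (∑ i : Fin r, c i) = r * c i0 by
      rw [Finset.sum_congr rfl (fun i _ => hceq i), Finset.sum_const, smul_eq_mul,
        Finset.card_univ, Fintype.card_fin]] at this
    exact this
  -- pointwise bound on the summand
  have hpoint : ∀ a ∈ A, ∀ b ∈ A,
      (1 : ℝ) - 2 * ∑ i : Fin r, (if a i ≠ 0 then (1:ℝ) else 0) * (if b i ≠ 0 then (1:ℝ) else 0)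
        ≤ (if (∑ i, a i * b i) = (0 : ZMod 2) then (1 : ℝ) else -1) := by
    intro a _ b _
    have hnonneg : (0:ℝ) ≤ ∑ i : Fin r,
        (if a i ≠ 0 then (1:ℝ) else 0) * (if b i ≠ 0 then (1:ℝ) else 0) := by
      apply Finset.sum_nonneg
      intro i _
      positivity
    by_cases hip : (∑ i, a i * b i) = (0 : ZMod 2)
    · rw [if_pos hip]
      linarith
    · rw [if_neg hip]
      have hex : ∃ i : Fin r, a i * b i ≠ 0 := by
        by_contra hcon
        push_neg at hcon
        exact hip (Finset.sum_eq_zero fun i _ => hcon i)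
      obtain ⟨i, hi⟩ := hex
      rw [mul_ne_zero_iff] at hi
      have hone : (1:ℝ) ≤ ∑ i : Fin r,
          (if a i ≠ 0 then (1:ℝ) else 0) * (if b i ≠ 0 then (1:ℝ) else 0) := by
        have := Finset.single_le_sum (f := fun i : Fin r =>
          (if a i ≠ 0 then (1:ℝ) else 0) * (if b i ≠ 0 then (1:ℝ) else 0))
          (fun i _ => by positivity) (Finset.mem_univ i)
        simp only [if_pos hi.1, if_pos hi.2, one_mul] at this
        exact this.trans_eq rfl
      linarith
  -- sum of the lower bounds
  have hsum2 : ∑ a ∈ A, ∑ b ∈ A,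
      ((1 : ℝ) - 2 * ∑ i : Fin r, (if a i ≠ 0 then (1:ℝ) else 0) * (if b i ≠ 0 then (1:ℝ) else 0))
      = (N : ℝ)^2 - 2 * (r : ℝ) * (c i0 : ℝ)^2 := by
    have hcol : ∀ i : Fin r, ∑ a ∈ A, (if a i ≠ 0 then (1:ℝ) else 0) = (c i : ℝ) := by
      intro i
      rw [Finset.sum_boole]
    have hswap : ∑ a ∈ A, ∑ b ∈ A, ∑ i : Fin r,
        (if a i ≠ 0 then (1:ℝ) else 0) * (if b i ≠ 0 then (1:ℝ) else 0)
        = ∑ i : Fin r, (c i : ℝ)^2 := by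
      calc ∑ a ∈ A, ∑ b ∈ A, ∑ i : Fin r,
            (if a i ≠ 0 then (1:ℝ) else 0) * (if b i ≠ 0 then (1:ℝ) else 0)
          = ∑ a ∈ A, ∑ i : Fin r, ∑ b ∈ A,
            (if a i ≠ 0 then (1:ℝ) else 0) * (if b i ≠ 0 then (1:ℝ) else 0) := by
            exact Finset.sum_congr rfl fun a _ => Finset.sum_comm
        _ = ∑ i : Fin r, ∑ a ∈ A, ∑ b ∈ A,
            (if a i ≠ 0 then (1:ℝ) else 0) * (if b i ≠ 0 then (1:ℝ) else 0) :=
            Finset.sum_comm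
        _ = ∑ i : Fin r, (c i : ℝ)^2 := by
            apply Finset.sum_congr rfl
            intro i _
            rw [show ∑ a ∈ A, ∑ b ∈ A,
                (if a i ≠ 0 then (1:ℝ) else 0) * (if b i ≠ 0 then (1:ℝ) else 0)
                = (∑ a ∈ A, if a i ≠ 0 then (1:ℝ) else 0) *
                  (∑ b ∈ A, if b i ≠ 0 then (1:ℝ) else 0) by
              rw [Finset.sum_mul]
              exact Finset.sum_congr rfl fun a _ => (Finset.mul_sum _ _ _).symm]
            rw [hcol i]
            ring
    have hconst : ∑ i : Fin r, (c i : ℝ)^2 = (r : ℝ) * (c i0 : ℝ)^2 := by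
      rw [Finset.sum_congr rfl fun i _ => by rw [hceq i]]
      rw [Finset.sum_const, Finset.card_univ, Fintype.card_fin, nsmul_eq_mul]
    simp only [Finset.sum_sub_distrib, Finset.sum_const, nsmul_eq_mul, mul_one,
      ← Finset.mul_sum]
    rw [hswap, hconst]
    ring
  -- final arithmetic
  have hS : (N : ℝ)^2 - 2 * (r : ℝ) * (c i0 : ℝ)^2
      ≤ ∑ a ∈ A, ∑ b ∈ A, (if (∑ i, a i * b i) = (0 : ZMod 2) then (1 : ℝ) else -1) := by
    rw [← hsum2]
    exact Finset.sum_le_sum fun a ha => Finset.sum_le_sum fun b hb => hpoint a ha b hb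
  have hNR : (0:ℝ) < (N : ℝ) := by exact_mod_cast hNpos
  have hrR : (0:ℝ) < (r : ℝ) := by exact_mod_cast hrpos
  have hcast : (r:ℝ) * (c i0 : ℝ) = (N:ℝ) * (w:ℝ) := by exact_mod_cast hsum
  have hwsq : (100:ℝ) * (w:ℝ)^2 ≤ (r:ℝ) := by exact_mod_cast wt_sq_le r
  have key : 100 * ((r:ℝ) * (c i0 : ℝ)^2) ≤ (N:ℝ)^2 := by
    have h2 : ((r:ℝ) * (c i0 : ℝ))^2 = (N:ℝ)^2 * (w:ℝ)^2 := by rw [hcast]; ring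
    nlinarith [sq_nonneg ((N:ℝ)), sq_nonneg ((c i0 : ℝ)), hrR,
      mul_le_mul_of_nonneg_left hwsq (sq_nonneg ((N:ℝ)))]
  rw [le_div_iff₀ (by positivity)]
  nlinarith [hS, key, sq_nonneg ((N:ℝ))]
end

section
/- There exists an absolute constant K > 0 with the following property. Let X, Y be finite nonempty sets, f : X × Y → {0,1} with r = rank(f) ≥ 2, and c ≥ 1 a real number. Suppose that for every nonempty rectangle R ⊆ X × Y there exists a nonempty monochromatic rectangle R' ⊆ R with |R'| ≥ 2^{−c}·|R|. Then X × Y can be partitioned into at most 2^{K·(c + log₂ r)·log₂ r} rectangles, each monochromatic for f. -/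
/-!
Write `δ = 2^{-c}`. In a rectangle `A × B` of rank `r`, apply the hypothesis to a set of
representatives of the distinct rows and of the distinct columns, and saturate the resulting
monochromatic rectangle by all equal rows and columns: this gives a monochromatic `A₁ × B₁` that
contains at least a `δ`-fraction of the distinct rows and of the distinct columns. As `A₁ × B₁`
has rank at most one, `rank (A₁ × B) + rank (A × B₁) ≤ r + 1`, so one of these two rectangles has
rank at most `(r + 1) / 2` and is partitioned recursively, while the rest of `A × B` keeps at most
a `(1 - δ)`-fraction of its distinct rows (or columns). A 0/1 matrix of rank `r` has at most `2^r`
distinct rows and columns, so after `k ≈ 2^{c+1} r` steps what is left is a single class of equal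
rows and columns. So the number `N(r)` of rectangles needed at rank `r` satisfies
`N(r) ≤ k N((r + 1) / 2) + 1`, whence
`N(r) ≤ 4 (k + 1)^{⌈log₂ r⌉} = 2^{O((c + log r) log r)}`.
-/

open Finset Module

theorem Submodule.finrank_add_finrank_map_le_of_le {K V W : Type*} [Field K] [AddCommGroup V]
    [Module K V] [AddCommGroup W] [Module K W] [FiniteDimensional K V] {p q : Submodule K V}
    (hpq : p ≤ q) (π : V →ₗ[K] W) :
    finrank K p + finrank K (q.map π) ≤ finrank K q + finrank K (p.map π) := by
  have hp := LinearMap.finrank_range_add_finrank_ker (π.domRestrict p)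
  have hq := LinearMap.finrank_range_add_finrank_ker (π.domRestrict q)
  rw [LinearMap.range_domRestrict] at hp hq
  have hker : finrank K (LinearMap.ker (π.domRestrict p)) ≤
      finrank K (LinearMap.ker (π.domRestrict q)) :=
    LinearMap.finrank_le_finrank_of_injective
      (f := (Submodule.inclusion hpq).restrict fun x hx => hx)
      fun x y hxy => Subtype.ext <| Subtype.ext <| congrArg (fun z => z.1.1) hxy
  omega

namespace Matrix

variable {K m n m' n' : Type*} [Field K]

theorem rank_submatrix_rows_add_rank_submatrix_cols_le [Fintype m] [Fintype n] [Fintype m']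
    [Fintype n'] (A : Matrix m n K) (u : m' → m) (v : n' → n) :
    (A.submatrix u id).rank + (A.submatrix id v).rank ≤ A.rank + (A.submatrix u v).rank := by
  have hrows : Set.range (A.submatrix u id).row ⊆ Set.range A.row :=
    Set.range_comp_subset_range u A.row
  have hcols : Set.range (A.submatrix id v).row = LinearMap.funLeft K K v '' Set.range A.row :=
    Set.range_comp (LinearMap.funLeft K K v) A.row
  have hblock : Set.range (A.submatrix u v).row =
      LinearMap.funLeft K K v '' Set.range (A.submatrix u id).row :=
    Set.range_comp (LinearMap.funLeft K K v) (A.submatrix u id).row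
  have := Submodule.finrank_add_finrank_map_le_of_le (Submodule.span_mono hrows)
    (LinearMap.funLeft K K v)
  rw [Submodule.map_span, Submodule.map_span, ← hcols, ← hblock] at this
  simpa only [rank_eq_finrank_span_row] using this

theorem rank_le_one_of_forall_eq [Fintype n] {A : Matrix m n K} {e : K} (h : ∀ i j, A i j = e) :
    A.rank ≤ 1 := by
  have : A = vecMulVec (fun _ => e) (fun _ => 1) := by
    ext i j
    simp [vecMulVec_apply, h]
  exact this ▸ rank_vecMulVec_le _ _

end Matrix

namespace NisanWigderson

noncomputable def boolMatrix {α β : Type*} (g : α → β → Bool) : Matrix α β ℝ :=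
  Matrix.of fun a b => if g a b then 1 else 0

/-- Two rows of a 0/1 matrix that agree on a set of columns spanning the column space agree
everywhere, so restricting the rows to such a set, of size `rank`, is injective. -/
theorem card_image_le_two_pow_rank {α β : Type*} [Fintype α] [Fintype β]
    (g : α → β → Bool) : #(univ.image g) ≤ 2 ^ (boolMatrix g).rank := by
  classical
  set M := boolMatrix g
  obtain ⟨κ, cols, -, hspan, hli⟩ := exists_linearIndependent' ℝ M.col
  have : Fintype κ := @Fintype.ofFinite κ hli.finite
  have hrank : Fintype.card κ = M.rank := by
    rw [M.rank_eq_finrank_span_cols, ← hspan, finrank_span_eq_card hli]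
  have hdet : ∀ a a', (∀ k, g a (cols k) = g a' (cols k)) → g a = g a' := by
    intro a a' h
    have hle : Submodule.span ℝ (Set.range M.col) ≤
        LinearMap.ker (LinearMap.proj (R := ℝ) (φ := fun _ : α => ℝ) a - LinearMap.proj a') := by
      rw [← hspan, Submodule.span_le]
      rintro _ ⟨k, rfl⟩
      simp [M, boolMatrix, h k]
    funext b
    have hb := hle (Submodule.subset_span ⟨b, rfl⟩)
    simp only [LinearMap.mem_ker, LinearMap.sub_apply, LinearMap.proj_apply, sub_eq_zero, M,
      boolMatrix, Matrix.col_apply, Matrix.of_apply] at hb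
    cases hab : g a b <;> cases hab' : g a' b <;> simp_all
  have hinj : Set.InjOn (fun ρ : β → Bool => fun k => ρ (cols k)) (univ.image g) := by
    rintro _ ha _ ha' h
    obtain ⟨a, -, rfl⟩ := mem_image.mp ha
    obtain ⟨a', -, rfl⟩ := mem_image.mp ha'
    exact hdet a a' (congrFun h)
  calc #(univ.image g) = #((univ.image g).image fun ρ k => ρ (cols k)) :=
        (card_image_of_injOn hinj).symm
    _ ≤ Fintype.card (κ → Bool) := card_le_univ _
    _ = 2 ^ M.rank := by rw [Fintype.card_fun, Fintype.card_bool, hrank]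

variable {X Y : Type*}

noncomputable def rectRank (f : X → Y → Bool) (A : Finset X) (B : Finset Y) : ℕ :=
  (boolMatrix fun (a : A) (b : B) => f a b).rank

def numRows (f : X → Y → Bool) (A : Finset X) (B : Finset Y) : ℕ :=
  #(A.image fun x (b : B) => f x b)

def numCols (f : X → Y → Bool) (A : Finset X) (B : Finset Y) : ℕ :=
  numRows (flip f) B A

def IsMono (f : X → Y → Bool) (A : Finset X) (B : Finset Y) : Prop :=
  ∀ x ∈ A, ∀ y ∈ B, ∀ x' ∈ A, ∀ y' ∈ B, f x y = f x' y'

def HasMonoPartition (f : X → Y → Bool) (T : Finset (X × Y)) (n : ℕ) : Prop :=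
  ∃ S : Finset (Finset X × Finset Y), #S ≤ n ∧ (∀ R ∈ S, IsMono f R.1 R.2 ∧ R.1 ×ˢ R.2 ⊆ T) ∧
    ∀ p ∈ T, ∃! R, R ∈ S ∧ p ∈ R.1 ×ˢ R.2

def HasDenseMonoRects (f : X → Y → Bool) (δ : ℝ) : Prop :=
  ∀ (A : Finset X) (B : Finset Y), A.Nonempty → B.Nonempty →
    ∃ (A' : Finset X) (B' : Finset Y), A' ⊆ A ∧ B' ⊆ B ∧ A'.Nonempty ∧ B'.Nonempty ∧
      δ * (#A * #B : ℝ) ≤ (#A' * #B' : ℝ) ∧ IsMono f A' B'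

section Rank

variable (f : X → Y → Bool)

theorem rectRank_univ_le [Fintype X] [Fintype Y] : rectRank f univ univ ≤ rankOf f :=
  Matrix.rank_submatrix_le (boolMatrix f) Subtype.val Subtype.val

theorem rectRank_mono {A A' : Finset X} {B B' : Finset Y} (hA : A' ⊆ A) (hB : B' ⊆ B) :
    rectRank f A' B' ≤ rectRank f A B :=
  Matrix.rank_submatrix_le (boolMatrix fun (a : A) (b : B) => f a b) (fun a : A' => ⟨a, hA a.2⟩)
    (fun b : B' => ⟨b, hB b.2⟩)

theorem rectRank_flip (A : Finset X) (B : Finset Y) : rectRank (flip f) B A = rectRank f A B :=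
  Matrix.rank_transpose _

theorem numRows_le_two_pow_rectRank (A : Finset X) (B : Finset Y) :
    numRows f A B ≤ 2 ^ rectRank f A B := by
  classical
  have : A.image (fun x (b : B) => f x b) = univ.image fun (a : A) (b : B) => f a b := by
    conv_lhs => rw [← attach_image_val (s := A)]
    rw [image_image, univ_eq_attach]
    rfl
  rw [numRows, this]
  exact card_image_le_two_pow_rank _

theorem numCols_le_two_pow_rectRank (A : Finset X) (B : Finset Y) :
    numCols f A B ≤ 2 ^ rectRank f A B :=
  rectRank_flip f A B ▸ numRows_le_two_pow_rectRank (flip f) B A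

theorem rectRank_add_rectRank_le {A A₁ : Finset X} {B B₁ : Finset Y} (hA : A₁ ⊆ A) (hB : B₁ ⊆ B)
    {v : Bool} (h : ∀ x ∈ A₁, ∀ y ∈ B₁, f x y = v) :
    rectRank f A₁ B + rectRank f A B₁ ≤ rectRank f A B + 1 := by
  have hblock := Matrix.rank_le_one_of_forall_eq
    (A := (boolMatrix fun (a : A) (b : B) => f a b).submatrix (fun a : A₁ => ⟨a, hA a.2⟩)
      (fun b : B₁ => ⟨b, hB b.2⟩)) (e := if v then 1 else 0) fun a b => by
    simp [boolMatrix, h a a.2 b b.2]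
  have := Matrix.rank_submatrix_rows_add_rank_submatrix_cols_le
    (boolMatrix fun (a : A) (b : B) => f a b) (fun a : A₁ => ⟨a, hA a.2⟩)
    (fun b : B₁ => ⟨b, hB b.2⟩)
  exact this.trans (Nat.add_le_add_left hblock _)

end Rank

section Partition

variable {f : X → Y → Bool}

theorem HasMonoPartition.mono {T : Finset (X × Y)} {n m : ℕ} (h : HasMonoPartition f T n)
    (hnm : n ≤ m) : HasMonoPartition f T m :=
  let ⟨S, hS, hR, hcover⟩ := h
  ⟨S, hS.trans hnm, hR, hcover⟩

theorem HasMonoPartition.exists_fin [Fintype X] [Fintype Y] {n : ℕ}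
    (h : HasMonoPartition f (univ ×ˢ univ) n) :
    ∃ (N : ℕ) (R : Fin N → Finset X × Finset Y), N ≤ n ∧
      (∀ p : X × Y, ∃! i : Fin N, p.1 ∈ (R i).1 ∧ p.2 ∈ (R i).2) ∧
      ∀ i, IsMono f (R i).1 (R i).2 := by
  obtain ⟨S, hS, hR, hcover⟩ := h
  refine ⟨#S, fun i => S.equivFin.symm i, hS, fun p => ?_, fun i => (hR _ (S.equivFin.symm i).2).1⟩
  obtain ⟨R, ⟨hRS, hpR⟩, huniq⟩ := hcover p (mem_product.mpr ⟨mem_univ _, mem_univ _⟩)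
  refine ⟨S.equivFin ⟨R, hRS⟩, by simpa using mem_product.mp hpR, fun i hi => ?_⟩
  exact (Equiv.symm_apply_eq _).mp
    (Subtype.ext (huniq _ ⟨(S.equivFin.symm i).2, mem_product.mpr hi⟩))

variable [DecidableEq X] [DecidableEq Y]

theorem HasMonoPartition.union {T₁ T₂ : Finset (X × Y)} {n₁ n₂ : ℕ}
    (h₁ : HasMonoPartition f T₁ n₁) (h₂ : HasMonoPartition f T₂ n₂) (hT : Disjoint T₁ T₂) :
    HasMonoPartition f (T₁ ∪ T₂) (n₁ + n₂) := by
  obtain ⟨S₁, hS₁, hR₁, hcover₁⟩ := h₁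
  obtain ⟨S₂, hS₂, hR₂, hcover₂⟩ := h₂
  have extend : ∀ {S S' : Finset (Finset X × Finset Y)} {p : X × Y},
      (∃! R, R ∈ S ∧ p ∈ R.1 ×ˢ R.2) → (∀ R ∈ S', p ∉ R.1 ×ˢ R.2) →
      ∃! R, R ∈ S ∪ S' ∧ p ∈ R.1 ×ˢ R.2 := by
    rintro S S' p ⟨R, hR, huniq⟩ hout
    refine ⟨R, ⟨mem_union_left _ hR.1, hR.2⟩, fun R' ⟨hR', hp⟩ => ?_⟩
    rcases mem_union.mp hR' with hR' | hR'
    exacts [huniq R' ⟨hR', hp⟩, absurd hp (hout R' hR')]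
  refine ⟨S₁ ∪ S₂, (card_union_le _ _).trans (Nat.add_le_add hS₁ hS₂), ?_, ?_⟩
  · intro R hR
    rcases mem_union.mp hR with hR | hR
    · exact ⟨(hR₁ R hR).1, (hR₁ R hR).2.trans subset_union_left⟩
    · exact ⟨(hR₂ R hR).1, (hR₂ R hR).2.trans subset_union_right⟩
  · intro p hp
    rcases mem_union.mp hp with hp | hp
    · exact extend (hcover₁ p hp) fun R hR hpR => disjoint_left.mp hT hp ((hR₂ R hR).2 hpR)
    · rw [union_comm]
      exact extend (hcover₂ p hp) fun R hR hpR => disjoint_right.mp hT hp ((hR₁ R hR).2 hpR)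

theorem HasMonoPartition.union_rows {A A₁ : Finset X} {B : Finset Y} {n₁ n₂ : ℕ} (hA : A₁ ⊆ A)
    (h₁ : HasMonoPartition f (A₁ ×ˢ B) n₁) (h₂ : HasMonoPartition f ((A \ A₁) ×ˢ B) n₂) :
    HasMonoPartition f (A ×ˢ B) (n₁ + n₂) := by
  have := h₁.union h₂ (disjoint_product.mpr (Or.inl disjoint_sdiff))
  rwa [← union_product, union_sdiff_of_subset hA] at this

theorem HasMonoPartition.union_cols {A : Finset X} {B B₁ : Finset Y} {n₁ n₂ : ℕ} (hB : B₁ ⊆ B)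
    (h₁ : HasMonoPartition f (A ×ˢ B₁) n₁) (h₂ : HasMonoPartition f (A ×ˢ (B \ B₁)) n₂) :
    HasMonoPartition f (A ×ˢ B) (n₁ + n₂) := by
  have := h₁.union h₂ (disjoint_product.mpr (Or.inr disjoint_sdiff))
  rwa [← product_union, union_sdiff_of_subset hB] at this

theorem hasMonoPartition_classes (f : X → Y → Bool) (A : Finset X) (B : Finset Y) :
    HasMonoPartition f (A ×ˢ B) (numRows f A B * numCols f A B) := by
  set row : X → B → Bool := fun x b => f x b
  set col : Y → A → Bool := fun y a => f a y
  set cell : (B → Bool) × (A → Bool) → Finset X × Finset Y :=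
    fun ργ => (A.filter (row · = ργ.1), B.filter (col · = ργ.2))
  have mem_cell : ∀ {p : X × Y} {ργ}, p ∈ (cell ργ).1 ×ˢ (cell ργ).2 ↔
      p ∈ A ×ˢ B ∧ ργ = (row p.1, col p.2) := by
    simp only [cell, mem_product, mem_filter, Prod.ext_iff]
    tauto
  refine ⟨(A.image row ×ˢ B.image col).image cell, card_image_le.trans (card_product _ _).le, ?_, ?_⟩
  · intro R hR
    obtain ⟨ργ, -, rfl⟩ := mem_image.mp hR
    refine ⟨fun x hx y hy x' hx' y' hy' => ?_, fun p hp => (mem_cell.mp hp).1⟩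
    obtain ⟨-, hx⟩ := mem_filter.mp hx
    obtain ⟨hyB, hy⟩ := mem_filter.mp hy
    obtain ⟨hx'A, hx'⟩ := mem_filter.mp hx'
    obtain ⟨-, hy'⟩ := mem_filter.mp hy'
    calc f x y = f x' y := congrFun (hx.trans hx'.symm) ⟨y, hyB⟩
      _ = f x' y' := congrFun (hy.trans hy'.symm) ⟨x', hx'A⟩
  · intro p hp
    refine ⟨cell (row p.1, col p.2), ⟨?_, mem_cell.mpr ⟨hp, rfl⟩⟩, ?_⟩
    · obtain ⟨hpA, hpB⟩ := mem_product.mp hp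
      exact mem_image_of_mem _ (mem_product.mpr ⟨mem_image_of_mem _ hpA, mem_image_of_mem _ hpB⟩)
    · rintro R ⟨hR, hpR⟩
      obtain ⟨ργ, -, rfl⟩ := mem_image.mp hR
      rw [(mem_cell.mp hpR).2]

end Partition

section Step

variable (f : X → Y → Bool)

theorem numRows_mono_right (A : Finset X) {B B' : Finset Y} (hB : B' ⊆ B) :
    numRows f A B' ≤ numRows f A B := by
  have : A.image (fun x (b : B') => f x b) =
      (A.image fun x (b : B) => f x b).image fun ρ (b : B') => ρ ⟨b, hB b.2⟩ := by
    rw [image_image]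
    rfl
  rw [numRows, this]
  exact card_image_le

theorem exists_row_representatives (A : Finset X) (B : Finset Y) :
    ∃ A₀ ⊆ A, Set.InjOn (fun x (b : B) => f x b) A₀ ∧ #A₀ = numRows f A B := by
  obtain ⟨A₀, hsub, hinj, himg⟩ := exists_subset_injOn_image_eq_of_surjOn (A : Set X)
    (A.image fun x (b : B) => f x b) (by rw [coe_image]; exact Set.surjOn_image _ _)
  exact ⟨A₀, coe_subset.mp hsub, hinj, by rw [numRows, ← himg, card_image_of_injOn hinj]⟩

theorem exists_row_saturation [DecidableEq X] {A A' : Finset X} (B : Finset Y) (hA' : A' ⊆ A)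
    (hinj : Set.InjOn (fun x (b : B) => f x b) A') :
    ∃ A₁ ⊆ A, numRows f (A \ A₁) B + #A' = numRows f A B ∧
      ∀ x ∈ A₁, ∃ x' ∈ A', ∀ y ∈ B, f x y = f x' y := by
  set row : X → B → Bool := fun x b => f x b
  refine ⟨A.filter (row · ∈ A'.image row), filter_subset _ _, ?_, ?_⟩
  · have : (A \ A.filter (row · ∈ A'.image row)).image row = A.image row \ A'.image row := by
      ext ρ
      simp only [mem_image, mem_sdiff, mem_filter, not_and]
      constructor
      · rintro ⟨x, ⟨hx, hx'⟩, rfl⟩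
        exact ⟨⟨x, hx, rfl⟩, hx' hx⟩
      · rintro ⟨⟨x, hx, rfl⟩, hx'⟩
        exact ⟨x, ⟨hx, fun _ => hx'⟩, rfl⟩
    rw [numRows, this, ← card_image_of_injOn hinj]
    exact card_sdiff_add_card_eq_card (image_subset_image hA')
  · intro x hx
    obtain ⟨x', hx', hrow⟩ := mem_image.mp (mem_filter.mp hx).2
    exact ⟨x', hx', fun y hy => (congrFun hrow ⟨y, hy⟩).symm⟩

theorem le_of_mul_le_mul_of_le {δ a b a' b' : ℝ} (hb : 0 < b) (ha' : 0 ≤ a') (hb' : b' ≤ b)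
    (h : δ * (a * b) ≤ a' * b') : δ * a ≤ a' :=
  le_of_mul_le_mul_right (by nlinarith) hb

theorem exists_split {δ : ℝ} (hf : HasDenseMonoRects f δ) [DecidableEq X] [DecidableEq Y]
    {A : Finset X} {B : Finset Y} (hA : A.Nonempty) (hB : B.Nonempty) :
    ∃ A₁ ⊆ A, ∃ B₁ ⊆ B, rectRank f A₁ B + rectRank f A B₁ ≤ rectRank f A B + 1 ∧
      (numRows f (A \ A₁) B : ℝ) ≤ (1 - δ) * numRows f A B ∧
      (numCols f A (B \ B₁) : ℝ) ≤ (1 - δ) * numCols f A B := by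
  obtain ⟨A₀, hA₀, hinjA, hcardA⟩ := exists_row_representatives f A B
  obtain ⟨B₀, hB₀, hinjB, hcardB⟩ := exists_row_representatives (flip f) B A
  have hA₀ne : A₀.Nonempty := card_pos.mp (hcardA ▸ card_pos.mpr (hA.image _))
  have hB₀ne : B₀.Nonempty := card_pos.mp (hcardB ▸ card_pos.mpr (hB.image _))
  obtain ⟨A', B', hA'A₀, hB'B₀, ⟨x₀, hx₀⟩, ⟨y₀, hy₀⟩, hdense, hmono⟩ := hf A₀ B₀ hA₀ne hB₀ne
  obtain ⟨A₁, hA₁A, hrows, hsatA⟩ :=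
    exists_row_saturation f B (hA'A₀.trans hA₀) (hinjA.mono hA'A₀)
  obtain ⟨B₁, hB₁B, hcols, hsatB⟩ :=
    exists_row_saturation (flip f) A (hB'B₀.trans hB₀) (hinjB.mono hB'B₀)
  have hconst : ∀ x ∈ A₁, ∀ y ∈ B₁, f x y = f x₀ y₀ := by
    intro x hx y hy
    obtain ⟨x', hx', hxrow⟩ := hsatA x hx
    obtain ⟨y', hy', hycol⟩ := hsatB y hy
    rw [hxrow y (hB₁B hy)]
    exact (hycol x' (hA₀ (hA'A₀ hx'))).trans (hmono x' hx' y' hy' x₀ hx₀ y₀ hy₀)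
  have hA'card : δ * numRows f A B ≤ #A' := by
    rw [← hcardA]
    exact le_of_mul_le_mul_of_le (b := #B₀) (b' := #B') (by exact_mod_cast hB₀ne.card_pos)
      (by positivity) (by exact_mod_cast card_le_card hB'B₀) hdense
  have hB'card : δ * numCols f A B ≤ #B' := by
    rw [numCols, ← hcardB]
    exact le_of_mul_le_mul_of_le (b := #A₀) (b' := #A') (by exact_mod_cast hA₀ne.card_pos)
      (by positivity) (by exact_mod_cast card_le_card hA'A₀) (by linarith)
  refine ⟨A₁, hA₁A, B₁, hB₁B, rectRank_add_rectRank_le f hA₁A hB₁B hconst, ?_, ?_⟩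
  · have : (numRows f (A \ A₁) B : ℝ) + #A' = numRows f A B := by exact_mod_cast hrows
    linarith
  · have : (numCols f A (B \ B₁) : ℝ) + #B' = numCols f A B := by exact_mod_cast hcols
    linarith

end Step

section Recursion

variable (f : X → Y → Bool) {δ : ℝ} [DecidableEq X] [DecidableEq Y]

theorem hasMonoPartition_of_potential_le (hf : HasDenseMonoRects f δ) (hδ : δ ≤ 1) {r N : ℕ}
    (hrec : ∀ A B, rectRank f A B ≤ (r + 1) / 2 → HasMonoPartition f (A ×ˢ B) N) (j : ℕ) :
    ∀ A B, rectRank f A B ≤ r → (numRows f A B * numCols f A B : ℝ) * (1 - δ) ^ j ≤ 1 →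
      HasMonoPartition f (A ×ˢ B) (j * N + 1) := by
  induction j with
  | zero =>
    intro A B _ hP
    rw [pow_zero, mul_one] at hP
    exact (hasMonoPartition_classes f A B).mono (by simpa using (by exact_mod_cast hP))
  | succ j ih =>
    intro A B hrk hP
    by_cases hsmall : numRows f A B * numCols f A B ≤ 1
    · exact (hasMonoPartition_classes f A B).mono (hsmall.trans (Nat.le_add_left _ _))
    have hA : A.Nonempty := nonempty_of_ne_empty (by rintro rfl; simp [numRows] at hsmall)
    have hB : B.Nonempty :=
      nonempty_of_ne_empty (by rintro rfl; simp [numCols, numRows] at hsmall)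
    obtain ⟨A₁, hA₁, B₁, hB₁, hrank, hrows, hcols⟩ := exists_split f hf hA hB
    have hdrop : ∀ A₂ B₂, (numRows f A₂ B₂ * numCols f A₂ B₂ : ℝ) ≤
        (1 - δ) * (numRows f A B * numCols f A B) →
        (numRows f A₂ B₂ * numCols f A₂ B₂ : ℝ) * (1 - δ) ^ j ≤ 1 := fun A₂ B₂ h =>
      calc (numRows f A₂ B₂ * numCols f A₂ B₂ : ℝ) * (1 - δ) ^ j
          ≤ (1 - δ) * (numRows f A B * numCols f A B) * (1 - δ) ^ j :=
            mul_le_mul_of_nonneg_right h (pow_nonneg (by linarith) j)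
        _ = (numRows f A B * numCols f A B : ℝ) * (1 - δ) ^ (j + 1) := by ring
        _ ≤ 1 := hP
    have hcount : N + (j * N + 1) = (j + 1) * N + 1 := by ring
    rcases (by omega : rectRank f A₁ B ≤ (r + 1) / 2 ∨ rectRank f A B₁ ≤ (r + 1) / 2)
      with hlow | hlow
    · refine hcount ▸ HasMonoPartition.union_rows hA₁ (hrec A₁ B hlow)
        (ih _ _ ((rectRank_mono f sdiff_subset subset_rfl).trans hrk) (hdrop _ _ ?_))
      have hcols' : (numCols f (A \ A₁) B : ℝ) ≤ numCols f A B := by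
        exact_mod_cast numRows_mono_right (flip f) B sdiff_subset
      rw [← mul_assoc]
      exact mul_le_mul hrows hcols' (by positivity) (le_trans (by positivity) hrows)
    · refine hcount ▸ HasMonoPartition.union_cols hB₁ (hrec A B₁ hlow)
        (ih _ _ ((rectRank_mono f subset_rfl sdiff_subset).trans hrk) (hdrop _ _ ?_))
      have hrows' : (numRows f A (B \ B₁) : ℝ) ≤ numRows f A B := by
        exact_mod_cast numRows_mono_right f A sdiff_subset
      rw [mul_left_comm]
      exact mul_le_mul hrows' hcols (by positivity) (by positivity)

theorem hasMonoPartition_of_rectRank_le (hf : HasDenseMonoRects f δ) (hδ : δ ≤ 1) {k : ℕ}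
    (hk : ∀ A B, (numRows f A B * numCols f A B : ℝ) * (1 - δ) ^ k ≤ 1) (r : ℕ) :
    ∀ A B, rectRank f A B ≤ r → HasMonoPartition f (A ×ˢ B) (4 * (k + 1) ^ Nat.clog 2 r) := by
  induction r using Nat.strong_induction_on with
  | _ r ih =>
  intro A B hrk
  rcases Nat.lt_or_ge r 2 with hr | hr
  · refine (hasMonoPartition_classes f A B).mono ?_
    calc numRows f A B * numCols f A B ≤ 2 ^ rectRank f A B * 2 ^ rectRank f A B :=
          Nat.mul_le_mul (numRows_le_two_pow_rectRank f A B) (numCols_le_two_pow_rectRank f A B)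
      _ ≤ 2 ^ 1 * 2 ^ 1 := by gcongr <;> omega
      _ ≤ 4 * (k + 1) ^ Nat.clog 2 r := Nat.le_mul_of_pos_right _ (by positivity)
  · have hclog : Nat.clog 2 r = Nat.clog 2 ((r + 1) / 2) + 1 := Nat.clog_of_two_le one_lt_two hr
    refine (hasMonoPartition_of_potential_le f hf hδ (ih _ (by omega)) k A B hrk (hk A B)).mono ?_
    have : 1 ≤ (k + 1) ^ Nat.clog 2 ((r + 1) / 2) := Nat.one_le_pow _ _ k.succ_pos
    rw [hclog, pow_succ]
    nlinarith

end Recursion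

section Bounds

open Real

theorem four_pow_mul_one_sub_pow_le_one {δ : ℝ} {R k : ℕ} (hδ : δ ≤ 1) (hk : 2 * R ≤ δ * k) :
    (4 : ℝ) ^ R * (1 - δ) ^ k ≤ 1 := by
  have h4 : (4 : ℝ) ≤ exp 2 := by
    have := add_one_le_exp 1
    rw [show (2 : ℝ) = 1 + 1 by norm_num, exp_add]
    nlinarith
  calc (4 : ℝ) ^ R * (1 - δ) ^ k ≤ exp 2 ^ R * exp (-δ) ^ k := by
        gcongr
        exact one_sub_le_exp_neg δ
    _ = exp (2 * R - δ * k) := by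
        rw [← exp_nat_mul, ← exp_nat_mul, ← exp_add]
        ring_nf
    _ ≤ 1 := exp_le_one_iff.mpr (by linarith)

theorem four_mul_pow_clog_le {c : ℝ} (hc : 1 ≤ c) {R : ℕ} (hR : 2 ≤ R) :
    ((4 * (⌈2 * R * (2 : ℝ) ^ c⌉₊ + 1) ^ Nat.clog 2 R : ℕ) : ℝ) ≤
      2 ^ (5 * (c + logb 2 R) * logb 2 R) := by
  set L := logb 2 R
  have hR' : (2 : ℝ) ≤ R := by exact_mod_cast hR
  have hL : 1 ≤ L := by
    rw [← logb_self_eq_one (b := 2) (by norm_num)]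
    exact logb_le_logb_of_le (by norm_num) (by norm_num) hR'
  have hclog : (Nat.clog 2 R : ℝ) ≤ L + 1 := by
    rw [← natCeil_logb_natCast]
    exact (Nat.ceil_lt_add_one (by push_cast; linarith)).le
  have h2c : (1 : ℝ) ≤ 2 ^ c := one_le_rpow (by norm_num) (by linarith)
  have hbase : ((⌈2 * R * (2 : ℝ) ^ c⌉₊ + 1 : ℕ) : ℝ) ≤ 2 ^ (c + 2 + L) := by
    have hceil := Nat.ceil_lt_add_one (by positivity : (0 : ℝ) ≤ 2 * R * 2 ^ c)
    have : (2 : ℝ) ^ (c + 2 + L) = 2 ^ c * 4 * R := by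
      rw [rpow_add (by norm_num), rpow_add (by norm_num), rpow_logb (by norm_num) (by norm_num)
        (by linarith)]
      norm_num
    push_cast
    nlinarith
  calc ((4 * (⌈2 * R * (2 : ℝ) ^ c⌉₊ + 1) ^ Nat.clog 2 R : ℕ) : ℝ)
      ≤ 4 * ((2 : ℝ) ^ (c + 2 + L)) ^ Nat.clog 2 R := by
        push_cast
        gcongr
        exact_mod_cast hbase
    _ = 2 ^ (2 + (c + 2 + L) * Nat.clog 2 R) := by
        rw [← rpow_natCast, ← rpow_mul (by norm_num), rpow_add (by norm_num)]
        norm_num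
    _ ≤ 2 ^ (2 + (c + 2 + L) * (L + 1)) := by
        gcongr
        norm_num
    _ ≤ 2 ^ (5 * (c + L) * L) := by
        gcongr
        · norm_num
        · nlinarith

theorem numRows_mul_numCols_le_four_pow [Fintype X] [Fintype Y] (f : X → Y → Bool)
    (A : Finset X) (B : Finset Y) : numRows f A B * numCols f A B ≤ 4 ^ rankOf f :=
  calc numRows f A B * numCols f A B ≤ 2 ^ rectRank f A B * 2 ^ rectRank f A B :=
        Nat.mul_le_mul (numRows_le_two_pow_rectRank f A B) (numCols_le_two_pow_rectRank f A B)
    _ ≤ 2 ^ rankOf f * 2 ^ rankOf f := by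
        have := (rectRank_mono f (subset_univ A) (subset_univ B)).trans (rectRank_univ_le f)
        gcongr <;> omega
    _ = 4 ^ rankOf f := by rw [← mul_pow]; norm_num

end Bounds

end NisanWigderson

open NisanWigderson Real

/-- Nisan–Wigderson variant with a rank-independent density guarantee: there is an absolute
constant `K > 0` such that if every nonempty rectangle of `f` (of rank `r ≥ 2`) contains a
nonempty monochromatic sub-rectangle of relative size at least `2^{−c}` (for some real `c ≥ 1`),
then `X × Y` can be partitioned into at most `2^{K·(c + log₂ r)·log₂ r}` monochromatic
rectangles. -/
theorem nisan_wigderson_fixed_density :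
    ∃ K : ℝ, 0 < K ∧
      ∀ (X Y : Type) [Fintype X] [Fintype Y] [Nonempty X] [Nonempty Y]
        (f : X → Y → Bool), 2 ≤ rankOf f →
        ∀ c : ℝ, 1 ≤ c →
        (∀ (A : Finset X) (B : Finset Y), A.Nonempty → B.Nonempty →
          ∃ (A' : Finset X) (B' : Finset Y), A' ⊆ A ∧ B' ⊆ B ∧ A'.Nonempty ∧ B'.Nonempty ∧
            (2 : ℝ) ^ (-c) * (A.card * B.card : ℝ) ≤ (A'.card * B'.card : ℝ) ∧
            (∀ x ∈ A', ∀ y ∈ B', ∀ x' ∈ A', ∀ y' ∈ B', f x y = f x' y')) →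
        ∃ (N : ℕ) (R : Fin N → Finset X × Finset Y),
          (N : ℝ) ≤ 2 ^ (K * (c + Real.logb 2 (rankOf f)) * Real.logb 2 (rankOf f)) ∧
          (∀ p : X × Y, ∃! i : Fin N, p.1 ∈ (R i).1 ∧ p.2 ∈ (R i).2) ∧
          (∀ i : Fin N, ∀ x ∈ (R i).1, ∀ y ∈ (R i).2, ∀ x' ∈ (R i).1, ∀ y' ∈ (R i).2,
            f x y = f x' y') := by
  refine ⟨5, by norm_num, fun X Y _ _ _ _ f hrank c hc hyp => ?_⟩
  classical
  set k := ⌈2 * rankOf f * (2 : ℝ) ^ c⌉₊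
  have hδ : (2 : ℝ) ^ (-c) ≤ 1 := rpow_le_one_of_one_le_of_nonpos (by norm_num) (by linarith)
  have hsteps : 2 * (rankOf f : ℝ) ≤ 2 ^ (-c) * k :=
    calc 2 * (rankOf f : ℝ) = 2 ^ (-c) * (2 * rankOf f * 2 ^ c) := by
          rw [rpow_neg (by norm_num)]
          field_simp
      _ ≤ 2 ^ (-c) * k := by gcongr; exact Nat.le_ceil _
  have hk : ∀ A B, (numRows f A B * numCols f A B : ℝ) * (1 - 2 ^ (-c)) ^ k ≤ 1 := fun A B =>
    calc (numRows f A B * numCols f A B : ℝ) * (1 - 2 ^ (-c)) ^ k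
        ≤ 4 ^ rankOf f * (1 - 2 ^ (-c)) ^ k := by
          gcongr
          exact_mod_cast numRows_mul_numCols_le_four_pow f A B
      _ ≤ 1 := four_pow_mul_one_sub_pow_le_one hδ hsteps
  obtain ⟨N, R, hN, hcover, hmono⟩ := (hasMonoPartition_of_rectRank_le f hyp hδ hk (rankOf f)
    univ univ (rectRank_univ_le f)).exists_fin
  exact ⟨N, R, (Nat.cast_le.mpr hN).trans (four_mul_pow_clog_le hc hrank), hcover, hmono⟩
end
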